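/- arXiv:2309.01056 — 4 statements merged into one kernel-verified Lean document; each statement's English description precedes it below -/
import Mathlib

section
/- Suppose there is a fixed matrix A ∈ ℝ^{a×b} with f_ℓ(x) = A g_ℓ(x) for every ℓ = 1,…,p and every x ∈ 𝒳 (each f_ℓ is the same fixed linear function of g_ℓ; in particular f_ℓ is contained in the span of g_ℓ's components). Let F be a joint distribution of (X,T,Y) with Y square-integrable, and let c, c' ∈ ℝ be any two constants such that the pooled Gram matrices Σ_{ℓ=1}^p E_F[((T−c) f_ℓ(X), g_ℓ(X)) ((T−c) f_ℓ(X), g_ℓ(X))ᵀ] and Σ_{ℓ=1}^p E_F[((T−c') f_ℓ(X), g_ℓ(X)) ((T−c') f_ℓ(X), g_ℓ(X))ᵀ] are both invertible. Then the θ-component of the unique minimizer of E_F[Σ_{ℓ=1}^p (Y_ℓ − θᵀ(T−c) f_ℓ(X) − βᵀ g_ℓ(X))²] is the same as the θ-component of the unique minimizer of E_F[Σ_{ℓ=1}^p (Y_ℓ − θᵀ(T−c') f_ℓ(X) − βᵀ g_ℓ(X))²]; i.e., centering the treatment does not change the regression coefficient on the interaction block. -/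
/-!
With `v = (θ, β)` and pooled features `Z_ℓ = ((T − c) f_ℓ(X), g_ℓ(X))`, the objective is the
quadratic `Σ_ℓ E[Y_ℓ²] − 2 vᵀm + vᵀGv` with `m = Σ_ℓ E[Y_ℓ Z_ℓ]` and `G = Σ_ℓ E[Z_ℓ Z_ℓᵀ]`
positive semidefinite.
When `G` is invertible, the solution of the normal equations `G v = m` is the unique minimizer.
Since `f_ℓ = A g_ℓ`, we have `(T − c) θᵀf_ℓ = (T − c') θᵀf_ℓ + (c' − c) (Aᵀθ)ᵀg_ℓ`, so the objective
centred at `c` at `(θ, β)` equals the objective centred at `c'` at `(θ, β + (c' − c) Aᵀθ)`.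
This bijection fixes `θ` and carries minimizers to minimizers.
-/

open MeasureTheory ProbabilityTheory Matrix
open scoped ENNReal

noncomputable section

/-- The population least-squares objective
`E_F[Σ_ℓ (Y_ℓ − θᵀ(T−c) f_ℓ(X) − βᵀ g_ℓ(X))²]` with treatment centered at `c`. -/
noncomputable def lsObj {Ω 𝒳 : Type*} [MeasurableSpace Ω]
    {p a b : ℕ} (F : Measure Ω) (X : Ω → 𝒳) (T : Ω → ℝ) (Y : Ω → Fin p → ℝ)
    (f : Fin p → 𝒳 → Fin a → ℝ) (g : Fin p → 𝒳 → Fin b → ℝ)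
    (c : ℝ) (θβ : (Fin a → ℝ) × (Fin b → ℝ)) : ℝ :=
  ∫ ω, ∑ ℓ, (Y ω ℓ - (∑ i, θβ.1 i * ((T ω - c) * f ℓ (X ω) i))
      - ∑ j, θβ.2 j * g ℓ (X ω) j) ^ 2 ∂F

/-- The pooled Gram matrix
`Σ_ℓ E_F[((T−c) f_ℓ(X), g_ℓ(X)) ((T−c) f_ℓ(X), g_ℓ(X))ᵀ]`,
indexed by `Fin a ⊕ Fin b`. -/
noncomputable def pooledGram {Ω 𝒳 : Type*} [MeasurableSpace Ω]
    {p a b : ℕ} (F : Measure Ω) (X : Ω → 𝒳) (T : Ω → ℝ)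
    (f : Fin p → 𝒳 → Fin a → ℝ) (g : Fin p → 𝒳 → Fin b → ℝ)
    (c : ℝ) : Matrix (Fin a ⊕ Fin b) (Fin a ⊕ Fin b) ℝ :=
  Matrix.of fun i j => ∑ ℓ, ∫ ω,
    (Sum.elim (fun i' => (T ω - c) * f ℓ (X ω) i') (fun j' => g ℓ (X ω) j') i) *
    (Sum.elim (fun i' => (T ω - c) * f ℓ (X ω) i') (fun j' => g ℓ (X ω) j') j) ∂F

namespace Matrix

variable {n : Type*} [Fintype n] [DecidableEq n]

theorem existsUnique_isMin_of_posSemidef_of_isUnit {J : (n → ℝ) → ℝ} {G : Matrix n n ℝ}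
    (hG : G.PosSemidef) (hGu : IsUnit G) (C : ℝ) (m : n → ℝ)
    (hJ : ∀ v, J v = C - 2 * (v ⬝ᵥ m) + v ⬝ᵥ G *ᵥ v) :
    ∃! v, ∀ w, J v ≤ J w := by
  have hsymm : ∀ u w, u ⬝ᵥ G *ᵥ w = w ⬝ᵥ G *ᵥ u := fun u w => by
    rw [dotProduct_mulVec, dotProduct_comm, ← vecMul_transpose, (isHermitian_iff_isSymm.1 hG.1).eq]
  have hnonneg : ∀ w, 0 ≤ w ⬝ᵥ G *ᵥ w := hG.dotProduct_mulVec_nonneg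
  obtain ⟨v₀, hv₀⟩ := mulVec_surjective_iff_isUnit.2 hGu m
  -- `v₀` solves the normal equations, so `J` has no linear term around `v₀`
  have hJ_add : ∀ w, J (v₀ + w) = J v₀ + w ⬝ᵥ G *ᵥ w := fun w => by
    simp only [hJ, mulVec_add, dotProduct_add, add_dotProduct, hsymm v₀ w, hv₀]
    ring
  refine ⟨v₀, fun w => ?_, fun v hv => ?_⟩
  · rw [← add_sub_cancel v₀ w, hJ_add]
    linarith [hnonneg (w - v₀)]
  · have hle := hv v₀
    rw [← add_sub_cancel v₀ v, hJ_add] at hle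
    have hzero : (v - v₀) ⬝ᵥ G *ᵥ (v - v₀) = 0 := le_antisymm (by linarith) (hnonneg _)
    have hker := (hG.dotProduct_mulVec_zero_iff (v - v₀)).1 (by simpa using hzero)
    exact sub_eq_zero.1 (mulVec_injective_iff_isUnit.2 hGu (hker.trans (mulVec_zero _).symm))

end Matrix

namespace LeastSquares

variable {Ω n ι : Type*} [MeasurableSpace Ω] [Fintype n] [Fintype ι] {μ : Measure Ω}

def secondMoment (μ : Measure Ω) (z : Ω → n → ℝ) : Matrix n n ℝ :=
  of fun k k' => ∫ ω, z ω k * z ω k' ∂μ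

def crossMoment (μ : Measure Ω) (y : Ω → ℝ) (z : Ω → n → ℝ) : n → ℝ :=
  fun k => ∫ ω, y ω * z ω k ∂μ

def pooledRisk (μ : Measure Ω) (Y : Ω → ι → ℝ) (Z : ι → Ω → n → ℝ) (v : n → ℝ) : ℝ :=
  ∫ ω, ∑ ℓ, (Y ω ℓ - v ⬝ᵥ Z ℓ ω) ^ 2 ∂μ

theorem integrable_dotProduct (v : n → ℝ) {h : Ω → n → ℝ}
    (hh : ∀ k, Integrable (fun ω => h ω k) μ) : Integrable (fun ω => v ⬝ᵥ h ω) μ :=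
  integrable_finsetSum _ fun k _ => (hh k).const_mul (v k)

theorem integral_dotProduct (v : n → ℝ) {h : Ω → n → ℝ}
    (hh : ∀ k, Integrable (fun ω => h ω k) μ) :
    ∫ ω, v ⬝ᵥ h ω ∂μ = v ⬝ᵥ fun k => ∫ ω, h ω k ∂μ := by
  simp only [dotProduct]
  rw [integral_finsetSum _ fun k _ => (hh k).const_mul _]
  simp only [integral_const_mul]

theorem integral_dotProduct_mulVec (v w : n → ℝ) {M : Ω → Matrix n n ℝ}
    (hM : ∀ k k', Integrable (fun ω => M ω k k') μ) :
    ∫ ω, v ⬝ᵥ M ω *ᵥ w ∂μ = v ⬝ᵥ (of fun k k' => ∫ ω, M ω k k' ∂μ) *ᵥ w := by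
  have hrow : ∀ ω k, (M ω *ᵥ w) k = w ⬝ᵥ M ω k := fun ω k => dotProduct_comm _ _
  simp_rw [integral_dotProduct v fun k => (integrable_dotProduct w (hM k)).congr
    (ae_of_all _ fun ω => (hrow ω k).symm), hrow, integral_dotProduct w (hM _)]
  congr 1 with k
  exact dotProduct_comm _ _

theorem memLp_dotProduct (v : n → ℝ) {z : Ω → n → ℝ} (hz : ∀ k, MemLp (fun ω => z ω k) 2 μ) :
    MemLp (fun ω => v ⬝ᵥ z ω) 2 μ :=
  memLp_finsetSum _ fun k _ => (hz k).const_mul (v k)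

theorem sq_dotProduct_eq_dotProduct_vecMulVec_mulVec (v z : n → ℝ) :
    (v ⬝ᵥ z) ^ 2 = v ⬝ᵥ vecMulVec z z *ᵥ v := by
  rw [dotProduct_mulVec, vecMul_vecMulVec, smul_dotProduct, smul_eq_mul, dotProduct_comm z, sq]

theorem integral_sq_sub_dotProduct {y : Ω → ℝ} {z : Ω → n → ℝ} (hy : MemLp y 2 μ)
    (hz : ∀ k, MemLp (fun ω => z ω k) 2 μ) (v : n → ℝ) :
    ∫ ω, (y ω - v ⬝ᵥ z ω) ^ 2 ∂μ
      = ∫ ω, y ω ^ 2 ∂μ - 2 * (v ⬝ᵥ crossMoment μ y z) + v ⬝ᵥ secondMoment μ z *ᵥ v := by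
  have hvz := memLp_dotProduct v hz
  have hcross : ∫ ω, y ω * (v ⬝ᵥ z ω) ∂μ = v ⬝ᵥ crossMoment μ y z := by
    simp_rw [← smul_eq_mul, ← dotProduct_smul]
    exact integral_dotProduct v fun k => hy.integrable_mul (hz k)
  have hsecond : ∫ ω, (v ⬝ᵥ z ω) ^ 2 ∂μ = v ⬝ᵥ secondMoment μ z *ᵥ v := by
    simp_rw [sq_dotProduct_eq_dotProduct_vecMulVec_mulVec]
    exact integral_dotProduct_mulVec v v fun k k' => (hz k).integrable_mul (hz k')
  have h₁ : Integrable (fun ω => y ω ^ 2) μ := hy.integrable_sq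
  have h₂ : Integrable (fun ω => 2 * (y ω * v ⬝ᵥ z ω)) μ := (hy.integrable_mul hvz).const_mul 2
  have h₁₂ : Integrable (fun ω => y ω ^ 2 - 2 * (y ω * v ⬝ᵥ z ω)) μ := h₁.sub h₂
  simp_rw [sub_sq, mul_assoc]
  rw [integral_add h₁₂ hvz.integrable_sq, integral_sub h₁ h₂, integral_const_mul, hcross,
    hsecond]

theorem secondMoment_posSemidef {z : Ω → n → ℝ} (hz : ∀ k, MemLp (fun ω => z ω k) 2 μ) :
    (secondMoment μ z).PosSemidef := by
  refine .of_dotProduct_mulVec_nonneg (by ext k k'; simp only [secondMoment, conjTranspose_apply,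
    of_apply, star_trivial, mul_comm]) fun x => ?_
  have hquad := integral_dotProduct_mulVec x x
    (M := fun ω => vecMulVec (z ω) (z ω)) fun k k' => (hz k).integrable_mul (hz k')
  rw [star_trivial]
  calc 0 ≤ ∫ ω, (x ⬝ᵥ z ω) ^ 2 ∂μ := integral_nonneg fun ω => sq_nonneg _
    _ = x ⬝ᵥ secondMoment μ z *ᵥ x := by
      simp_rw [sq_dotProduct_eq_dotProduct_vecMulVec_mulVec]
      exact hquad

theorem pooledRisk_eq {Y : Ω → ι → ℝ} {Z : ι → Ω → n → ℝ}
    (hY : ∀ ℓ, MemLp (fun ω => Y ω ℓ) 2 μ) (hZ : ∀ ℓ k, MemLp (fun ω => Z ℓ ω k) 2 μ)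
    (v : n → ℝ) :
    pooledRisk μ Y Z v = ∑ ℓ, ∫ ω, Y ω ℓ ^ 2 ∂μ
      - 2 * (v ⬝ᵥ ∑ ℓ, crossMoment μ (fun ω => Y ω ℓ) (Z ℓ))
      + v ⬝ᵥ (∑ ℓ, secondMoment μ (Z ℓ)) *ᵥ v := by
  have hint : ∀ ℓ, Integrable (fun ω => (Y ω ℓ - v ⬝ᵥ Z ℓ ω) ^ 2) μ := fun ℓ =>
    ((hY ℓ).sub (memLp_dotProduct v (hZ ℓ))).integrable_sq
  rw [pooledRisk, integral_finsetSum _ fun ℓ _ => hint ℓ]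
  simp_rw [integral_sq_sub_dotProduct (hY _) (hZ _), sum_mulVec, dotProduct_sum,
    Finset.sum_add_distrib, Finset.sum_sub_distrib, Finset.mul_sum]

theorem existsUnique_isMin_pooledRisk [DecidableEq n] {Y : Ω → ι → ℝ} {Z : ι → Ω → n → ℝ}
    (hY : ∀ ℓ, MemLp (fun ω => Y ω ℓ) 2 μ) (hZ : ∀ ℓ k, MemLp (fun ω => Z ℓ ω k) 2 μ)
    (hG : IsUnit (∑ ℓ, secondMoment μ (Z ℓ))) :
    ∃! v, ∀ w, pooledRisk μ Y Z v ≤ pooledRisk μ Y Z w :=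
  existsUnique_isMin_of_posSemidef_of_isUnit
    (posSemidef_sum _ fun ℓ _ => secondMoment_posSemidef (hZ ℓ)) hG _ _ (pooledRisk_eq hY hZ)

end LeastSquares

section TreatmentInteraction

open LeastSquares

variable {Ω 𝒳 : Type*} [MeasurableSpace Ω] {p a b : ℕ} {F : Measure Ω} {X : Ω → 𝒳} {T : Ω → ℝ}
  {Y : Ω → Fin p → ℝ} {f : Fin p → 𝒳 → Fin a → ℝ} {g : Fin p → 𝒳 → Fin b → ℝ}

def interactionFeatures (X : Ω → 𝒳) (T : Ω → ℝ) (f : Fin p → 𝒳 → Fin a → ℝ)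
    (g : Fin p → 𝒳 → Fin b → ℝ) (c : ℝ) (ℓ : Fin p) (ω : Ω) : Fin a ⊕ Fin b → ℝ :=
  Sum.elim (fun i => (T ω - c) * f ℓ (X ω) i) (g ℓ (X ω))

theorem pooledGram_eq_sum_secondMoment (c : ℝ) :
    pooledGram F X T f g c = ∑ ℓ, secondMoment F (interactionFeatures X T f g c ℓ) := by
  ext k k'
  simp only [pooledGram, secondMoment, interactionFeatures, Matrix.sum_apply, Matrix.of_apply]

theorem lsObj_sumArrowEquivProdArrow (c : ℝ) (v : Fin a ⊕ Fin b → ℝ) :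
    lsObj F X T Y f g c (Equiv.sumArrowEquivProdArrow _ _ _ v)
      = pooledRisk F Y (interactionFeatures X T f g c) v := by
  simp only [lsObj, pooledRisk, dotProduct, Fintype.sum_sum_type, interactionFeatures,
    Equiv.sumArrowEquivProdArrow_apply_fst, Equiv.sumArrowEquivProdArrow_apply_snd,
    Sum.elim_inl, Sum.elim_inr, sub_sub]

theorem lsObj_eq_lsObj_shift {A : Matrix (Fin a) (Fin b) ℝ} (hA : ∀ ℓ x, f ℓ x = A *ᵥ g ℓ x)
    (c c' : ℝ) (θβ : (Fin a → ℝ) × (Fin b → ℝ)) :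
    lsObj F X T Y f g c θβ = lsObj F X T Y f g c' (θβ.1, θβ.2 + (c' - c) • (θβ.1 ᵥ* A)) := by
  have hθ : ∀ t ℓ x, ∑ i, θβ.1 i * (t * f ℓ x i) = t * ∑ j, (θβ.1 ᵥ* A) j * g ℓ x j := by
    intro t ℓ x
    have hmul := dotProduct_mulVec θβ.1 A (g ℓ x)
    simp only [dotProduct] at hmul
    rw [hA, ← hmul, Finset.mul_sum]
    exact Finset.sum_congr rfl fun i _ => by ring
  simp only [lsObj, hθ, Pi.add_apply, Pi.smul_apply, smul_eq_mul, add_mul,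
    Finset.sum_add_distrib, mul_assoc, ← Finset.mul_sum]
  congr with ω
  congr with ℓ
  ring

theorem memLp_interactionFeatures [MeasurableSpace 𝒳] (hX : Measurable X) (hT : Measurable T)
    (hf : ∀ ℓ, Measurable (f ℓ)) (hg : ∀ ℓ, Measurable (g ℓ)) {c : ℝ}
    (hsq : ∀ ℓ k, Integrable (fun ω =>
      interactionFeatures X T f g c ℓ ω k * interactionFeatures X T f g c ℓ ω k) F)
    (ℓ : Fin p) (k : Fin a ⊕ Fin b) :
    MemLp (fun ω => interactionFeatures X T f g c ℓ ω k) 2 F := by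
  have hmeas : Measurable fun ω => interactionFeatures X T f g c ℓ ω k := by
    cases k with
    | inl i => exact (hT.sub_const c).mul ((measurable_pi_apply i).comp ((hf ℓ).comp hX))
    | inr j => exact (measurable_pi_apply j).comp ((hg ℓ).comp hX)
  exact (memLp_two_iff_integrable_sq hmeas.aestronglyMeasurable).2
    (by simpa only [sq] using hsq ℓ k)

theorem existsUnique_isMin_lsObj (hY : ∀ ℓ, MemLp (fun ω => Y ω ℓ) 2 F) {c : ℝ}
    (hZ : ∀ ℓ k, MemLp (fun ω => interactionFeatures X T f g c ℓ ω k) 2 F)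
    (hG : IsUnit (pooledGram F X T f g c)) :
    ∃! θβ, ∀ θβ', lsObj F X T Y f g c θβ ≤ lsObj F X T Y f g c θβ' := by
  rw [pooledGram_eq_sum_secondMoment] at hG
  refine (Equiv.sumArrowEquivProdArrow _ _ _).existsUnique_congr (fun v => ?_) |>.1
    (existsUnique_isMin_pooledRisk hY hZ hG)
  rw [← (Equiv.sumArrowEquivProdArrow _ _ _).forall_congr_right]
  simp only [lsObj_sumArrowEquivProdArrow]

end TreatmentInteraction

theorem statement1_general
    {Ω 𝒳 : Type*} [MeasurableSpace Ω] [MeasurableSpace 𝒳]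
    {p a b : ℕ}
    (F : Measure Ω)
    (X : Ω → 𝒳) (T : Ω → ℝ) (Y : Ω → Fin p → ℝ)
    (f : Fin p → 𝒳 → Fin a → ℝ) (g : Fin p → 𝒳 → Fin b → ℝ)
    (hX : Measurable X) (hT : Measurable T)
    (hf : ∀ ℓ, Measurable (f ℓ)) (hg : ∀ ℓ, Measurable (g ℓ))
    (hY2 : ∀ ℓ, MemLp (fun ω => Y ω ℓ) 2 F)
    -- each f_ℓ is the same fixed linear function of g_ℓ
    (A : Matrix (Fin a) (Fin b) ℝ)
    (hA : ∀ ℓ, ∀ x, f ℓ x = A *ᵥ g ℓ x)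
    (c c' : ℝ)
    -- all displayed expectations are finite
    (hGramInt : ∀ d : ℝ, ∀ ℓ, ∀ i j : Fin a ⊕ Fin b,
      Integrable (fun ω =>
        (Sum.elim (fun i' => (T ω - d) * f ℓ (X ω) i') (fun j' => g ℓ (X ω) j') i) *
        (Sum.elim (fun i' => (T ω - d) * f ℓ (X ω) i') (fun j' => g ℓ (X ω) j') j)) F)
    -- both pooled Gram matrices are invertible
    (hGc : IsUnit (pooledGram F X T f g c))
    (hGc' : IsUnit (pooledGram F X T f g c')) :
    (∃! θβ : (Fin a → ℝ) × (Fin b → ℝ),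
      ∀ θβ', lsObj F X T Y f g c θβ ≤ lsObj F X T Y f g c θβ') ∧
    (∃! θβ : (Fin a → ℝ) × (Fin b → ℝ),
      ∀ θβ', lsObj F X T Y f g c' θβ ≤ lsObj F X T Y f g c' θβ') ∧
    (∀ θβ θβ' : (Fin a → ℝ) × (Fin b → ℝ),
      (∀ q, lsObj F X T Y f g c θβ ≤ lsObj F X T Y f g c q) →
      (∀ q, lsObj F X T Y f g c' θβ' ≤ lsObj F X T Y f g c' q) →
      θβ.1 = θβ'.1) := by
  have hmin : ∀ d, IsUnit (pooledGram F X T f g d) → ∃! θβ : (Fin a → ℝ) × (Fin b → ℝ),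
      ∀ θβ', lsObj F X T Y f g d θβ ≤ lsObj F X T Y f g d θβ' := fun d hG =>
    existsUnique_isMin_lsObj hY2
      (memLp_interactionFeatures hX hT hf hg fun ℓ k => hGramInt d ℓ k k) hG
  refine ⟨hmin c hGc, hmin c' hGc', fun θβ θβ' hθβ hθβ' => ?_⟩
  set shift : (Fin a → ℝ) × (Fin b → ℝ) → (Fin a → ℝ) × (Fin b → ℝ) :=
    fun q => (q.1, q.2 + (c' - c) • (q.1 ᵥ* A))
  have hsurj : Function.Surjective shift := fun q =>
    ⟨(q.1, q.2 - (c' - c) • (q.1 ᵥ* A)), by simp [shift]⟩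
  have hshift : ∀ q, lsObj F X T Y f g c' (shift θβ) ≤ lsObj F X T Y f g c' q :=
    hsurj.forall.2 fun q => by simpa only [shift, ← lsObj_eq_lsObj_shift hA] using hθβ q
  have hshift_eq : shift θβ = θβ' := (hmin c' hGc').unique hshift hθβ'
  rw [← hshift_eq]

/-- if each `f_ℓ = A g_ℓ` for a fixed matrix `A` (so `f_ℓ` lies in
the span of the components of `g_ℓ`), then centering the treatment at `c`
versus `c'` does not change the θ-component of the (unique) population
least-squares minimizer, provided both pooled Gram matrices are invertible. -/
theorem statement1
    {Ω 𝒳 : Type*} [MeasurableSpace Ω] [MeasurableSpace 𝒳]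
    {p a b : ℕ}
    (F : Measure Ω) [IsProbabilityMeasure F]
    (X : Ω → 𝒳) (T : Ω → ℝ) (Y : Ω → Fin p → ℝ)
    (f : Fin p → 𝒳 → Fin a → ℝ) (g : Fin p → 𝒳 → Fin b → ℝ)
    (hX : Measurable X) (hT : Measurable T) (hY : Measurable Y)
    (hf : ∀ ℓ, Measurable (f ℓ)) (hg : ∀ ℓ, Measurable (g ℓ))
    (hT01 : ∀ ω, T ω = 0 ∨ T ω = 1)
    (hY2 : ∀ ℓ, MemLp (fun ω => Y ω ℓ) 2 F)
    -- each f_ℓ is the same fixed linear function of g_ℓ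
    (A : Matrix (Fin a) (Fin b) ℝ)
    (hA : ∀ ℓ, ∀ x, f ℓ x = A *ᵥ g ℓ x)
    (c c' : ℝ)
    -- all displayed expectations are finite
    (hobjInt : ∀ d : ℝ, ∀ θβ : (Fin a → ℝ) × (Fin b → ℝ),
      Integrable (fun ω => ∑ ℓ, (Y ω ℓ - (∑ i, θβ.1 i * ((T ω - d) * f ℓ (X ω) i))
        - ∑ j, θβ.2 j * g ℓ (X ω) j) ^ 2) F)
    (hGramInt : ∀ d : ℝ, ∀ ℓ, ∀ i j : Fin a ⊕ Fin b,
      Integrable (fun ω =>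
        (Sum.elim (fun i' => (T ω - d) * f ℓ (X ω) i') (fun j' => g ℓ (X ω) j') i) *
        (Sum.elim (fun i' => (T ω - d) * f ℓ (X ω) i') (fun j' => g ℓ (X ω) j') j)) F)
    -- both pooled Gram matrices are invertible
    (hGc : IsUnit (pooledGram F X T f g c))
    (hGc' : IsUnit (pooledGram F X T f g c')) :
    (∃! θβ : (Fin a → ℝ) × (Fin b → ℝ),
      ∀ θβ', lsObj F X T Y f g c θβ ≤ lsObj F X T Y f g c θβ') ∧
    (∃! θβ : (Fin a → ℝ) × (Fin b → ℝ),
      ∀ θβ', lsObj F X T Y f g c' θβ ≤ lsObj F X T Y f g c' θβ') ∧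
    (∀ θβ θβ' : (Fin a → ℝ) × (Fin b → ℝ),
      (∀ q, lsObj F X T Y f g c θβ ≤ lsObj F X T Y f g c q) →
      (∀ q, lsObj F X T Y f g c' θβ' ≤ lsObj F X T Y f g c' q) →
      θβ.1 = θβ'.1) :=
  statement1_general F X T Y f g hX hT hf hg hY2 A hA c c' hGramInt hGc hGc'

end
end

section
/- Let (X,T,Y) be random elements with T Bernoulli(π), 0 < π < 1, independent of X, and Y ∈ ℝ integrable. Let μ_1, μ_0 : 𝒳 → ℝ be measurable functions such that μ_t(X) is a version of the conditional expectation of Y given σ(X) under the conditional probability measure ℙ(· ∣ T = t), for t = 1 and t = 0. Then π(1−π)·(μ_1(X) − μ_0(X)) is a version of the conditional expectation E[(T−π) Y ∣ σ(X)] under ℙ. In particular, for every bounded measurable h : 𝒳 → ℝ, E[(T−π) Y h(X)] = π(1−π) E[(μ_1(X) − μ_0(X)) h(X)]. -/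
/-!
Under `P[|T = t]`, the defining property of `μ_t(X)` gives
`E[Y; X ∈ A, T = t] = E[μ_t(X); X ∈ A, T = t]`, and independence of `T` and `X` turns the
right-hand side into `P(T = t) · E[μ_t(X); X ∈ A]`. Since `T ∈ {0, 1}`,
`(T - π) Y = (1 - π) 1{T = 1} Y - π 1{T = 0} Y`, so integrating over `{X ∈ A}` gives
`π (1 - π) E[μ_1(X) - μ_0(X); X ∈ A]`, which characterises the conditional expectation.
The identity for bounded `h` follows by pulling `h(X)` out of the conditional expectation.
-/

open MeasureTheory ProbabilityTheory

section CondExpCond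

variable {Ω : Type*} {m m₀ : MeasurableSpace Ω} {P : Measure Ω} [IsFiniteMeasure P]
  {B S : Set Ω} {f g : Ω → ℝ}

lemma setIntegral_inter_eq_of_ae_eq_condExp_cond (hm : m ≤ m₀) (hPB : P B ≠ 0)
    (hf : Integrable f P) (hg : g =ᵐ[P[|B]] (P[|B])[f | m]) (hS : MeasurableSet[m] S) :
    ∫ ω in S ∩ B, g ω ∂P = ∫ ω in S ∩ B, f ω ∂P := by
  have h_cond : ∀ u : Ω → ℝ,
      ∫ ω in S, u ω ∂P[|B] = (P B)⁻¹.toReal * ∫ ω in S ∩ B, u ω ∂P := fun u => by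
    rw [ProbabilityTheory.cond, Measure.restrict_smul, integral_smul_measure,
      Measure.restrict_restrict (hm S hS), smul_eq_mul]
  have h_ne : (P B)⁻¹.toReal ≠ 0 := by
    simp [ENNReal.toReal_eq_zero_iff, hPB, measure_ne_top P B]
  have h_eq := calc ∫ ω in S, g ω ∂P[|B]
      = ∫ ω in S, (P[|B])[f | m] ω ∂P[|B] := setIntegral_congr_ae (hm S hS) (hg.mono fun _ h _ => h)
    _ = ∫ ω in S, f ω ∂P[|B] :=
        setIntegral_condExp hm (hf.restrict.smul_measure (ENNReal.inv_ne_top.2 hPB)) hS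
  rwa [h_cond, h_cond, mul_right_inj' h_ne] at h_eq

lemma integral_mul_eq_integral_mul_of_ae_eq_condExp (hm : m ≤ m₀) (hf : Integrable f P)
    (hg : g =ᵐ[P] P[f | m]) {h : Ω → ℝ} (hh : StronglyMeasurable[m] h) (c : ℝ)
    (hh_bound : ∀ᵐ ω ∂P, ‖h ω‖ ≤ c) :
    ∫ ω, f ω * h ω ∂P = ∫ ω, g ω * h ω ∂P :=
  calc ∫ ω, f ω * h ω ∂P = ∫ ω, (P[h * f | m]) ω ∂P := by
        rw [integral_condExp hm]; simp_rw [Pi.mul_apply, mul_comm]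
    _ = ∫ ω, g ω * h ω ∂P := by
        refine integral_congr_ae ?_
        filter_upwards [condExp_stronglyMeasurable_mul_of_bound hm hh hf c hh_bound, hg]
          with ω hω hgω
        rw [hω, Pi.mul_apply, hgω, mul_comm]

end CondExpCond

namespace ProbabilityTheory

variable {Ω 𝒳 β : Type*} [MeasurableSpace Ω] [MeasurableSpace 𝒳] [MeasurableSpace β]
  {P : Measure Ω} {T : Ω → β} {X : Ω → 𝒳} {A : Set 𝒳} {C : Set β}

lemma IndepFun.setIntegral_preimage_inter_preimage (hTX : IndepFun T X P) (hT : Measurable T)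
    (hX : Measurable X) (hA : MeasurableSet A) (hC : MeasurableSet C) {φ : 𝒳 → ℝ}
    (hφ : Measurable φ) :
    ∫ ω in X ⁻¹' A ∩ T ⁻¹' C, φ (X ω) ∂P = P.real (T ⁻¹' C) * ∫ ω in X ⁻¹' A, φ (X ω) ∂P :=
  calc ∫ ω in X ⁻¹' A ∩ T ⁻¹' C, φ (X ω) ∂P = ∫ ω in T ⁻¹' C, A.indicator φ (X ω) ∂P := by
        rw [Set.inter_comm, ← setIntegral_indicator (hX hA)]; rfl
    _ = P.real (T ⁻¹' C) * ∫ ω, A.indicator φ (X ω) ∂P :=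
        Indep.setIntegral_eq_mul hT.comap_le hTX hX.aemeasurable ⟨C, hC, rfl⟩
          (hφ.indicator hA).aestronglyMeasurable
    _ = P.real (T ⁻¹' C) * ∫ ω in X ⁻¹' A, φ (X ω) ∂P := by
        rw [← integral_indicator (hX hA)]; rfl

lemma IndepFun.setIntegral_preimage_inter_preimage_of_condExp_cond [IsFiniteMeasure P]
    (hTX : IndepFun T X P) (hT : Measurable T) (hX : Measurable X) (hA : MeasurableSet A)
    (hC : MeasurableSet C) (hPC : P (T ⁻¹' C) ≠ 0) {Y : Ω → ℝ} (hY : Integrable Y P)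
    {μ : 𝒳 → ℝ} (hμ : Measurable μ)
    (hμY : (fun ω => μ (X ω)) =ᵐ[P[|T ⁻¹' C]]
      condExp (MeasurableSpace.comap X ‹MeasurableSpace 𝒳›) (P[|T ⁻¹' C]) Y) :
    ∫ ω in X ⁻¹' A ∩ T ⁻¹' C, Y ω ∂P = P.real (T ⁻¹' C) * ∫ ω in X ⁻¹' A, μ (X ω) ∂P := by
  rw [← setIntegral_inter_eq_of_ae_eq_condExp_cond hX.comap_le hPC hY hμY ⟨A, hA, rfl⟩]
  exact hTX.setIntegral_preimage_inter_preimage hT hX hA hC hμ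

end ProbabilityTheory

section BinaryTreatment

variable {Ω : Type*} {T Y : Ω → ℝ}

lemma sub_mul_eq_indicator_sub_indicator (hT01 : ∀ ω, T ω = 0 ∨ T ω = 1) (c : ℝ) :
    (fun ω => (T ω - c) * Y ω)
      = fun ω => (1 - c) * (T ⁻¹' {1}).indicator Y ω - c * (T ⁻¹' {0}).indicator Y ω := by
  funext ω; rcases hT01 ω with h | h <;> simp [h]

variable [MeasurableSpace Ω] {P : Measure Ω}

lemma integrable_sub_mul (hT : Measurable T) (hT01 : ∀ ω, T ω = 0 ∨ T ω = 1)
    (hY : Integrable Y P) (c : ℝ) : Integrable (fun ω => (T ω - c) * Y ω) P := by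
  rw [sub_mul_eq_indicator_sub_indicator hT01]
  exact ((hY.indicator (hT (measurableSet_singleton 1))).const_mul _).sub
    ((hY.indicator (hT (measurableSet_singleton 0))).const_mul _)

lemma setIntegral_sub_mul (hT : Measurable T) (hT01 : ∀ ω, T ω = 0 ∨ T ω = 1)
    (hY : Integrable Y P) (c : ℝ) (S : Set Ω) :
    ∫ ω in S, (T ω - c) * Y ω ∂P
      = (1 - c) * ∫ ω in S ∩ T ⁻¹' {1}, Y ω ∂P - c * ∫ ω in S ∩ T ⁻¹' {0}, Y ω ∂P := by
  have hB1 : MeasurableSet (T ⁻¹' {1}) := hT (measurableSet_singleton 1)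
  have hB0 : MeasurableSet (T ⁻¹' {0}) := hT (measurableSet_singleton 0)
  rw [sub_mul_eq_indicator_sub_indicator hT01, integral_sub
      ((hY.indicator hB1).const_mul _).integrableOn ((hY.indicator hB0).const_mul _).integrableOn,
    integral_const_mul, integral_const_mul, setIntegral_indicator hB1, setIntegral_indicator hB0]

lemma measureReal_preimage_zero_eq_one_sub [IsProbabilityMeasure P] (hT : Measurable T)
    (hT01 : ∀ ω, T ω = 0 ∨ T ω = 1) : P.real (T ⁻¹' {0}) = 1 - P.real (T ⁻¹' {1}) := by
  have h_compl : T ⁻¹' {0} = (T ⁻¹' {1})ᶜ := by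
    ext ω; rcases hT01 ω with h | h <;> simp [h]
  rw [h_compl, probReal_compl_eq_one_sub (hT (measurableSet_singleton 1))]

end BinaryTreatment

theorem statement3_general
    {Ω 𝒳 : Type*} [MeasurableSpace Ω] [MeasurableSpace 𝒳]
    (P : Measure Ω) [IsProbabilityMeasure P]
    (X : Ω → 𝒳) (T : Ω → ℝ) (Y : Ω → ℝ)
    (hX : Measurable X) (hT : Measurable T)
    (π : ℝ) (hπ0 : 0 < π) (hπ1 : π < 1)
    (hT01 : ∀ ω, T ω = 0 ∨ T ω = 1)
    (hTπ : P {ω | T ω = 1} = ENNReal.ofReal π)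
    (hindep : IndepFun T X P)
    (hYint : Integrable Y P)
    (μ1 μ0 : 𝒳 → ℝ) (hμ1m : Measurable μ1) (hμ0m : Measurable μ0)
    (hμ1 : (fun ω => μ1 (X ω)) =ᵐ[P[|{ω | T ω = 1}]]
      MeasureTheory.condExp (MeasurableSpace.comap X ‹MeasurableSpace 𝒳›)
        (P[|{ω | T ω = 1}]) Y)
    (hμ0 : (fun ω => μ0 (X ω)) =ᵐ[P[|{ω | T ω = 0}]]
      MeasureTheory.condExp (MeasurableSpace.comap X ‹MeasurableSpace 𝒳›)
        (P[|{ω | T ω = 0}]) Y)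
    (hμ1int : Integrable (fun ω => μ1 (X ω)) P)
    (hμ0int : Integrable (fun ω => μ0 (X ω)) P) :
    ((fun ω => π * (1 - π) * (μ1 (X ω) - μ0 (X ω))) =ᵐ[P]
      MeasureTheory.condExp (MeasurableSpace.comap X ‹MeasurableSpace 𝒳›) P
        (fun ω => (T ω - π) * Y ω)) ∧
    (∀ h : 𝒳 → ℝ, Measurable h → (∃ C : ℝ, ∀ x, |h x| ≤ C) →
      ∫ ω, (T ω - π) * Y ω * h (X ω) ∂P
        = π * (1 - π) * ∫ ω, (μ1 (X ω) - μ0 (X ω)) * h (X ω) ∂P) := by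
  have hP1 : P.real (T ⁻¹' {1}) = π :=
    (congrArg ENNReal.toReal hTπ).trans (ENNReal.toReal_ofReal hπ0.le)
  have hP0 : P.real (T ⁻¹' {0}) = 1 - π := by rw [measureReal_preimage_zero_eq_one_sub hT hT01, hP1]
  have hsetIntegral : ∀ A, MeasurableSet A →
      ∫ ω in X ⁻¹' A, (T ω - π) * Y ω ∂P
        = π * (1 - π) * ∫ ω in X ⁻¹' A, μ1 (X ω) - μ0 (X ω) ∂P := by
    intro A hA
    rw [setIntegral_sub_mul hT hT01 hYint,
      hindep.setIntegral_preimage_inter_preimage_of_condExp_cond hT hX hA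
        (measurableSet_singleton 1) ((measureReal_ne_zero_iff).1 (hP1 ▸ hπ0.ne')) hYint hμ1m hμ1,
      hindep.setIntegral_preimage_inter_preimage_of_condExp_cond hT hX hA
        (measurableSet_singleton 0) ((measureReal_ne_zero_iff).1 (hP0 ▸ (sub_pos.2 hπ1).ne'))
        hYint hμ0m hμ0,
      hP1, hP0, integral_sub hμ1int.integrableOn hμ0int.integrableOn]
    ring
  have hcondExp : (fun ω => π * (1 - π) * (μ1 (X ω) - μ0 (X ω))) =ᵐ[P]
      condExp (MeasurableSpace.comap X ‹MeasurableSpace 𝒳›) P (fun ω => (T ω - π) * Y ω) := by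
    refine ae_eq_condExp_of_forall_setIntegral_eq hX.comap_le (integrable_sub_mul hT hT01 hYint π)
      (fun _ _ _ => ((hμ1int.sub hμ0int).const_mul _).integrableOn) ?_ ?_
    · rintro _ ⟨A, hA, rfl⟩ -
      rw [integral_const_mul, hsetIntegral A hA]
    · exact (((hμ1m.comp (comap_measurable X)).sub (hμ0m.comp (comap_measurable X))).const_mul
        _).aestronglyMeasurable
  refine ⟨hcondExp, fun h hh ⟨C, hC⟩ => ?_⟩
  rw [integral_mul_eq_integral_mul_of_ae_eq_condExp (h := fun ω => h (X ω)) hX.comap_le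
      (integrable_sub_mul hT hT01 hYint π) hcondExp
      (hh.comp (comap_measurable X)).stronglyMeasurable C (.of_forall fun ω => (Real.norm_eq_abs _).le.trans (hC (X ω))), ← integral_const_mul]
  simp_rw [mul_assoc]

/-- if `T ~ Bernoulli(π)` is independent of `X` and `Y` is
integrable, and `μ_t(X)` is a version of `E[Y ∣ σ(X)]` under `P(·∣T=t)`, then
`π(1−π)(μ_1(X) − μ_0(X))` is a version of `E[(T−π)Y ∣ σ(X)]` under `P`; in
particular `E[(T−π) Y h(X)] = π(1−π) E[(μ_1(X) − μ_0(X)) h(X)]` for every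
bounded measurable `h`. -/
theorem statement3
    {Ω 𝒳 : Type*} [MeasurableSpace Ω] [MeasurableSpace 𝒳]
    (P : Measure Ω) [IsProbabilityMeasure P]
    (X : Ω → 𝒳) (T : Ω → ℝ) (Y : Ω → ℝ)
    (hX : Measurable X) (hT : Measurable T) (hY : Measurable Y)
    (π : ℝ) (hπ0 : 0 < π) (hπ1 : π < 1)
    (hT01 : ∀ ω, T ω = 0 ∨ T ω = 1)
    (hTπ : P {ω | T ω = 1} = ENNReal.ofReal π)
    (hindep : IndepFun T X P)
    (hYint : Integrable Y P)
    (μ1 μ0 : 𝒳 → ℝ) (hμ1m : Measurable μ1) (hμ0m : Measurable μ0)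
    (hμ1 : (fun ω => μ1 (X ω)) =ᵐ[P[|{ω | T ω = 1}]]
      MeasureTheory.condExp (MeasurableSpace.comap X ‹MeasurableSpace 𝒳›)
        (P[|{ω | T ω = 1}]) Y)
    (hμ0 : (fun ω => μ0 (X ω)) =ᵐ[P[|{ω | T ω = 0}]]
      MeasureTheory.condExp (MeasurableSpace.comap X ‹MeasurableSpace 𝒳›)
        (P[|{ω | T ω = 0}]) Y)
    (hμ1int : Integrable (fun ω => μ1 (X ω)) P)
    (hμ0int : Integrable (fun ω => μ0 (X ω)) P) :
    ((fun ω => π * (1 - π) * (μ1 (X ω) - μ0 (X ω))) =ᵐ[P]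
      MeasureTheory.condExp (MeasurableSpace.comap X ‹MeasurableSpace 𝒳›) P
        (fun ω => (T ω - π) * Y ω)) ∧
    (∀ h : 𝒳 → ℝ, Measurable h → (∃ C : ℝ, ∀ x, |h x| ≤ C) →
      ∫ ω, (T ω - π) * Y ω * h (X ω) ∂P
        = π * (1 - π) * ∫ ω, (μ1 (X ω) - μ0 (X ω)) * h (X ω) ∂P) :=
  statement3_general P X T Y hX hT π hπ0 hπ1 hT01 hTπ hindep hYint μ1 μ0 hμ1m hμ0m hμ1 hμ0 hμ1int
    hμ0int
end

section
/- (Numerator identity under a linear conditional average treatment effect.) Let Q be a joint distribution of (X,T,Y) under which T is Bernoulli(π), 0 < π < 1, independent of X, and Y is square-integrable, and let P be another distribution with P_X absolutely continuous with respect to Q_X. Let τ_ℓ : 𝒳 → ℝ be measurable with τ_ℓ(X) a version of E_Q[Y_ℓ ∣ X, T=1] − E_Q[Y_ℓ ∣ X, T=0], let φ : 𝒳 → ℝ^d be measurable, and let w : 𝒳 → [0,∞) be measurable with E_Q[w(X) φ(X)] = E_P[φ(X)]. If there is a matrix B₀ ∈ ℝ^{a×d} with Σ_{ℓ=1}^p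 f_ℓ(x) τ_ℓ(x) = B₀ φ(x) for Q_X-almost every x, then Σ_{ℓ=1}^p E_Q[w(X) (T−π) f_ℓ(X) Y_ℓ] = π(1−π) Σ_{ℓ=1}^p E_P[f_ℓ(X) τ_ℓ(X)]. -/
open MeasureTheory ProbabilityTheory Matrix
open scoped ENNReal

/-!
On `{T = c}` the integrand `(T - π) F Y` equals `(c - π) F Y`. Since `T` is independent of `X`,
conditioning on `{T = c}` does not change `Q` on `σ(X)`, so for `σ(X)`-measurable `F` the pull-out
property gives `∫_{T=c} F Y dQ = Q(T = c) ∫ F E_{Q[·|T=c]}[Y | X] dQ`. Adding the two arms, with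
`Q(T = 1) = π` and `Q(T = 0) = 1 - π`, yields `∫ (T - π) F Y dQ = π (1 - π) ∫ F τ(X) dQ` for
`F = w f_ℓ`. Summed over `ℓ`, the linear CATE turns `∑ w f_ℓ τ_ℓ` into `w B₀ φ`, balancing moves
`∫ w φ dQ` to `∫ φ dP`, and `P_X ≪ Q_X` turns `B₀ φ` back into `∑ f_ℓ τ_ℓ` `P`-almost surely.
-/

section Conditioning

variable {Ω : Type*} {m m0 : MeasurableSpace Ω} {Q : Measure Ω} {s : Set Ω}

lemma integral_eq_of_trim_eq {ν : Measure Ω} (hm : m ≤ m0) (hQν : Q.trim hm = ν.trim hm)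
    {g : Ω → ℝ} (hg : StronglyMeasurable[m] g) : ∫ ω, g ω ∂Q = ∫ ω, g ω ∂ν := by
  rw [integral_trim hm hg, hQν, ← integral_trim hm hg]

lemma integrable_of_trim_eq {ν : Measure Ω} (hm : m ≤ m0) (hQν : Q.trim hm = ν.trim hm)
    {g : Ω → ℝ} (hg : StronglyMeasurable[m] g) (hgQ : Integrable g Q) : Integrable g ν :=
  integrable_of_integrable_trim hm (hQν ▸ hgQ.trim hm hg)

lemma integrable_cond_of_integrableOn {g : Ω → ℝ} (hg : IntegrableOn g s Q) :
    Integrable g Q[|s] := by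
  by_cases hQs : Q s = 0
  · simp [cond_eq_zero_of_meas_eq_zero hQs]
  · exact hg.smul_measure (ENNReal.inv_ne_top.mpr hQs)

lemma setIntegral_eq_measureReal_mul_integral_cond [IsFiniteMeasure Q] (g : Ω → ℝ) :
    ∫ ω in s, g ω ∂Q = Q.real s * ∫ ω, g ω ∂Q[|s] := by
  by_cases hQs : Q s = 0
  · simp [Measure.restrict_eq_zero.mpr hQs, cond_eq_zero_of_meas_eq_zero hQs]
  · rw [ProbabilityTheory.cond, integral_smul_measure, smul_eq_mul, ENNReal.toReal_inv,
      ← mul_assoc, measureReal_def,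
      mul_inv_cancel₀ (ENNReal.toReal_ne_zero.mpr ⟨hQs, measure_ne_top Q s⟩), one_mul]

variable {F G : Ω → ℝ}

lemma mul_condExp_cond_ae_eq (hF : StronglyMeasurable[m] F) (hG : IntegrableOn G s Q)
    (hFG : IntegrableOn (fun ω => F ω * G ω) s Q) :
    (fun ω => F ω * (Q[|s])[G|m] ω) =ᵐ[Q[|s]] (Q[|s])[fun ω => F ω * G ω|m] :=
  (condExp_mul_of_stronglyMeasurable_left hF (integrable_cond_of_integrableOn hFG)
    (integrable_cond_of_integrableOn hG)).symm

lemma integrable_mul_condExp_cond (hm : m ≤ m0) (htrim : (Q[|s]).trim hm = Q.trim hm)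
    (hF : StronglyMeasurable[m] F) (hG : IntegrableOn G s Q)
    (hFG : IntegrableOn (fun ω => F ω * G ω) s Q) :
    Integrable (fun ω => F ω * (Q[|s])[G|m] ω) Q :=
  integrable_of_trim_eq hm htrim (hF.mul stronglyMeasurable_condExp)
    (integrable_condExp.congr (mul_condExp_cond_ae_eq hF hG hFG).symm)

lemma setIntegral_mul_eq_measureReal_mul_integral_mul_condExp_cond [IsFiniteMeasure Q]
    (hm : m ≤ m0) (htrim : (Q[|s]).trim hm = Q.trim hm)
    (hF : StronglyMeasurable[m] F) (hG : IntegrableOn G s Q)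
    (hFG : IntegrableOn (fun ω => F ω * G ω) s Q) :
    ∫ ω in s, F ω * G ω ∂Q = Q.real s * ∫ ω, F ω * (Q[|s])[G|m] ω ∂Q := by
  rw [setIntegral_eq_measureReal_mul_integral_cond, ← integral_condExp hm,
    integral_congr_ae (mul_condExp_cond_ae_eq hF hG hFG).symm]
  exact congrArg _ (integral_eq_of_trim_eq hm htrim (hF.mul stronglyMeasurable_condExp))

end Conditioning

lemma ProbabilityTheory.IndepFun.cond_preimage_trim_comap_eq {Ω β 𝒳 : Type*}
    [MeasurableSpace Ω] [MeasurableSpace β] [m𝒳 : MeasurableSpace 𝒳] {Q : Measure Ω}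
    [IsFiniteMeasure Q] {T : Ω → β} {X : Ω → 𝒳} (hT : Measurable T) (hX : Measurable X)
    (hind : IndepFun T X Q)
    {B : Set β} (hB : MeasurableSet B) (hQB : Q (T ⁻¹' B) ≠ 0) :
    (Q[|T ⁻¹' B]).trim hX.comap_le = Q.trim hX.comap_le := by
  refine @Measure.ext Ω (m𝒳.comap X) _ _ fun t ht => ?_
  rw [trim_measurableSet_eq _ ht, trim_measurableSet_eq _ ht]
  obtain ⟨A, hA, rfl⟩ := ht
  rw [cond_apply (hT hB), hind.measure_inter_preimage_eq_mul B A hB hA,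
    ← mul_assoc, ENNReal.inv_mul_cancel hQB (measure_ne_top _ _), one_mul]

lemma treatment_zero_eq_compl {Ω : Type*} {T : Ω → ℝ} (hT01 : ∀ ω, T ω = 0 ∨ T ω = 1) :
    {ω | T ω = 0} = {ω | T ω = 1}ᶜ := by
  ext ω
  rcases hT01 ω with h | h <;> simp [h]

section Treatment

variable {Ω 𝒳 : Type*} [MeasurableSpace Ω] [m𝒳 : MeasurableSpace 𝒳] {Q : Measure Ω}
  {X : Ω → 𝒳} {T : Ω → ℝ} {π c : ℝ} {F G : Ω → ℝ}

lemma setIntegral_treatment_mul_eq (hT : Measurable T) :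
    ∫ ω in {ω | T ω = c}, (T ω - π) * F ω * G ω ∂Q
      = (c - π) * ∫ ω in {ω | T ω = c}, F ω * G ω ∂Q := by
  rw [← integral_const_mul]
  refine setIntegral_congr_fun (hT (measurableSet_singleton c)) fun ω (hω : T ω = c) => ?_
  rw [hω, mul_assoc]

lemma integrableOn_of_integrable_treatment_mul (hT : Measurable T) (hc : c ≠ π)
    (h : Integrable (fun ω => (T ω - π) * F ω * G ω) Q) :
    IntegrableOn (fun ω => F ω * G ω) {ω | T ω = c} Q := by
  rw [IntegrableOn, ← integrable_const_mul_iff (sub_ne_zero.mpr hc).isUnit]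
  refine h.restrict.congr ?_
  filter_upwards [ae_restrict_mem (hT (measurableSet_singleton c))] with ω (hω : T ω = c)
  rw [hω, mul_assoc]

lemma cond_treatment_trim_comap_eq [IsFiniteMeasure Q] (hT : Measurable T)
    (hX : Measurable X) (hind : IndepFun T X Q) (hQc : Q {ω | T ω = c} ≠ 0) :
    (Q[|{ω | T ω = c}]).trim hX.comap_le = Q.trim hX.comap_le := by
  have hpre : {ω | T ω = c} = T ⁻¹' {c} := rfl
  rw [hpre] at hQc ⊢
  exact hind.cond_preimage_trim_comap_eq hT hX (measurableSet_singleton c) hQc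

lemma integrable_mul_condExp_treatment [IsFiniteMeasure Q] (hT : Measurable T)
    (hX : Measurable X) (hind : IndepFun T X Q) (hQc : Q {ω | T ω = c} ≠ 0) (hc : c ≠ π)
    (hF : StronglyMeasurable[m𝒳.comap X] F) (hG : Integrable G Q)
    (h : Integrable (fun ω => (T ω - π) * F ω * G ω) Q) :
    Integrable (fun ω => F ω * (Q[|{ω | T ω = c}])[G|m𝒳.comap X] ω) Q :=
  integrable_mul_condExp_cond hX.comap_le
    (cond_treatment_trim_comap_eq hT hX hind hQc) hF
    hG.integrableOn (integrableOn_of_integrable_treatment_mul hT hc h)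

lemma setIntegral_treatment_mul_eq_integral_mul_condExp [IsFiniteMeasure Q]
    (hT : Measurable T) (hX : Measurable X) (hind : IndepFun T X Q)
    (hQc : Q {ω | T ω = c} ≠ 0) (hc : c ≠ π)
    (hF : StronglyMeasurable[m𝒳.comap X] F) (hG : Integrable G Q)
    (h : Integrable (fun ω => (T ω - π) * F ω * G ω) Q) :
    ∫ ω in {ω | T ω = c}, (T ω - π) * F ω * G ω ∂Q
      = (c - π) * Q.real {ω | T ω = c}
        * ∫ ω, F ω * (Q[|{ω | T ω = c}])[G|m𝒳.comap X] ω ∂Q := by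
  rw [setIntegral_treatment_mul_eq hT, mul_assoc,
    setIntegral_mul_eq_measureReal_mul_integral_mul_condExp_cond hX.comap_le
      (cond_treatment_trim_comap_eq hT hX hind hQc) hF
      hG.integrableOn (integrableOn_of_integrable_treatment_mul hT hc h)]

lemma measure_treatment_zero [IsProbabilityMeasure Q] (hT : Measurable T)
    (hT01 : ∀ ω, T ω = 0 ∨ T ω = 1) (hπ0 : 0 < π) (hTπ : Q {ω | T ω = 1} = ENNReal.ofReal π) :
    Q {ω | T ω = 0} = ENNReal.ofReal (1 - π) := by
  rw [treatment_zero_eq_compl hT01, measure_compl (measurableSet_eq_fun hT measurable_const)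
    (measure_ne_top _ _), hTπ, measure_univ, ENNReal.ofReal_sub 1 hπ0.le, ENNReal.ofReal_one]

lemma integrable_mul_treatment_contrast [IsProbabilityMeasure Q] (hT : Measurable T)
    (hX : Measurable X) (hind : IndepFun T X Q) (hT01 : ∀ ω, T ω = 0 ∨ T ω = 1)
    (hπ0 : 0 < π) (hπ1 : π < 1) (hTπ : Q {ω | T ω = 1} = ENNReal.ofReal π) {τ : Ω → ℝ}
    (hτ : τ =ᵐ[Q]
      (Q[|{ω | T ω = 1}])[G|m𝒳.comap X] - (Q[|{ω | T ω = 0}])[G|m𝒳.comap X])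
    (hF : StronglyMeasurable[m𝒳.comap X] F) (hG : Integrable G Q)
    (h : Integrable (fun ω => (T ω - π) * F ω * G ω) Q) :
    Integrable (fun ω => F ω * τ ω) Q := by
  have hQ1 : Q {ω | T ω = 1} ≠ 0 := by simp [hTπ, hπ0]
  have hQ0 : Q {ω | T ω = 0} ≠ 0 := by simp [measure_treatment_zero hT hT01 hπ0 hTπ, hπ1]
  refine ((integrable_mul_condExp_treatment hT hX hind hQ1 (by linarith) hF hG h).sub
    (integrable_mul_condExp_treatment hT hX hind hQ0 (by linarith) hF hG h)).congr ?_
  filter_upwards [hτ] with ω hω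
  simp [hω, mul_sub]

lemma integral_treatment_mul_eq_mul_integral_contrast [IsProbabilityMeasure Q]
    (hT : Measurable T) (hX : Measurable X) (hind : IndepFun T X Q)
    (hT01 : ∀ ω, T ω = 0 ∨ T ω = 1) (hπ0 : 0 < π) (hπ1 : π < 1)
    (hTπ : Q {ω | T ω = 1} = ENNReal.ofReal π) {τ : Ω → ℝ}
    (hτ : τ =ᵐ[Q]
      (Q[|{ω | T ω = 1}])[G|m𝒳.comap X] - (Q[|{ω | T ω = 0}])[G|m𝒳.comap X])
    (hF : StronglyMeasurable[m𝒳.comap X] F) (hG : Integrable G Q)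
    (h : Integrable (fun ω => (T ω - π) * F ω * G ω) Q) :
    ∫ ω, (T ω - π) * F ω * G ω ∂Q = π * (1 - π) * ∫ ω, F ω * τ ω ∂Q := by
  have hQ0 := measure_treatment_zero hT hT01 hπ0 hTπ
  have hQ1 : Q {ω | T ω = 1} ≠ 0 := by simp [hTπ, hπ0]
  have hQ0' : Q {ω | T ω = 0} ≠ 0 := by simp [hQ0, hπ1]
  have hI1 := integrable_mul_condExp_treatment hT hX hind hQ1 (by linarith) hF hG h
  have hI0 := integrable_mul_condExp_treatment hT hX hind hQ0' (by linarith) hF hG h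
  have hcontrast : ∫ ω, F ω * τ ω ∂Q
      = ∫ ω, F ω * (Q[|{ω | T ω = 1}])[G|m𝒳.comap X] ω ∂Q
        - ∫ ω, F ω * (Q[|{ω | T ω = 0}])[G|m𝒳.comap X] ω ∂Q := by
    rw [← integral_sub hI1 hI0]
    exact integral_congr_ae (hτ.mono fun ω hω => by simp [hω, mul_sub])
  have hs1 : MeasurableSet {ω | T ω = 1} := measurableSet_eq_fun hT measurable_const
  calc ∫ ω, (T ω - π) * F ω * G ω ∂Q
      = (∫ ω in {ω | T ω = 1}, (T ω - π) * F ω * G ω ∂Q)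
        + ∫ ω in {ω | T ω = 0}, (T ω - π) * F ω * G ω ∂Q := by
        rw [treatment_zero_eq_compl hT01, integral_add_compl hs1 h]
    _ = (1 - π) * π * ∫ ω, F ω * (Q[|{ω | T ω = 1}])[G|m𝒳.comap X] ω ∂Q
        + (0 - π) * (1 - π) * ∫ ω, F ω * (Q[|{ω | T ω = 0}])[G|m𝒳.comap X] ω ∂Q := by
        rw [setIntegral_treatment_mul_eq_integral_mul_condExp hT hX hind hQ1 (by linarith)
            hF hG h,
          setIntegral_treatment_mul_eq_integral_mul_condExp hT hX hind hQ0' (by linarith)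
            hF hG h,
          measureReal_def, measureReal_def, hTπ, hQ0, ENNReal.toReal_ofReal hπ0.le,
          ENNReal.toReal_ofReal (by linarith)]
    _ = π * (1 - π) * ∫ ω, F ω * τ ω ∂Q := by
        rw [hcontrast]
        ring

end Treatment

lemma integral_mulVec_apply {Ω ι κ : Type*} [MeasurableSpace Ω] [Fintype κ] {μ : Measure Ω}
    (B : Matrix ι κ ℝ) {v : Ω → κ → ℝ} (hv : ∀ k, Integrable (fun ω => v ω k) μ) (i : ι) :
    ∫ ω, (B *ᵥ v ω) i ∂μ = ∑ k, B i k * ∫ ω, v ω k ∂μ := by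
  simp only [mulVec, dotProduct]
  rw [integral_finsetSum _ fun k _ => (hv k).const_mul _]
  simp_rw [integral_const_mul]

theorem statement9_general
    {Ω 𝒳 : Type*} [MeasurableSpace Ω] [MeasurableSpace 𝒳]
    {p a d : ℕ}
    (P Q : Measure Ω) [IsProbabilityMeasure Q]
    (X : Ω → 𝒳) (T : Ω → ℝ) (Y : Ω → Fin p → ℝ)
    (f : Fin p → 𝒳 → Fin a → ℝ)
    (hX : Measurable X) (hT : Measurable T)
    (hf : ∀ ℓ, Measurable (f ℓ))
    (π : ℝ) (hπ0 : 0 < π) (hπ1 : π < 1)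
    (hT01 : ∀ ω, T ω = 0 ∨ T ω = 1)
    (hTπQ : Q {ω | T ω = 1} = ENNReal.ofReal π)
    (hindepQ : IndepFun T X Q)
    (hY2 : ∀ ℓ, MemLp (fun ω => Y ω ℓ) 2 Q)
    -- covariate overlap: P_X ≪ Q_X
    (habs : P.map X ≪ Q.map X)
    -- τ_ℓ(X) is a version of E_Q[Y_ℓ ∣ X, T=1] − E_Q[Y_ℓ ∣ X, T=0]
    (τ : Fin p → 𝒳 → ℝ)
    (hτ : ∀ ℓ, (fun ω => τ ℓ (X ω)) =ᵐ[Q]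
      fun ω => (MeasureTheory.condExp (MeasurableSpace.comap X ‹MeasurableSpace 𝒳›)
          (Q[|{ω' | T ω' = 1}]) (fun ω' => Y ω' ℓ)) ω
        - (MeasureTheory.condExp (MeasurableSpace.comap X ‹MeasurableSpace 𝒳›)
          (Q[|{ω' | T ω' = 0}]) (fun ω' => Y ω' ℓ)) ω)
    -- balancing features and weight
    (φ : 𝒳 → Fin d → ℝ)
    (w : 𝒳 → ℝ) (hwm : Measurable w)
    (hbal : ∀ k, ∫ ω, w (X ω) * φ (X ω) k ∂Q = ∫ ω, φ (X ω) k ∂P)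
    -- linear CATE: Σ_ℓ f_ℓ τ_ℓ = B₀ φ, Q_X-a.e.
    (B₀ : Matrix (Fin a) (Fin d) ℝ)
    (hB₀ : ∀ᵐ x ∂(Q.map X), ∀ i : Fin a, ∑ ℓ, f ℓ x i * τ ℓ x = (B₀ *ᵥ φ x) i)
    -- all displayed expectations are finite
    (hNumInt : ∀ ℓ, ∀ i : Fin a,
      Integrable (fun ω => w (X ω) * ((T ω - π) * f ℓ (X ω) i) * Y ω ℓ) Q)
    (hτInt : ∀ ℓ, ∀ i : Fin a, Integrable (fun ω => f ℓ (X ω) i * τ ℓ (X ω)) P)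
    (hφIntP : ∀ k, Integrable (fun ω => φ (X ω) k) P)
    (hφIntQ : ∀ k, Integrable (fun ω => w (X ω) * φ (X ω) k) Q) :
    ∀ i : Fin a,
      ∑ ℓ, ∫ ω, w (X ω) * ((T ω - π) * f ℓ (X ω) i) * Y ω ℓ ∂Q
        = π * (1 - π) * ∑ ℓ, ∫ ω, f ℓ (X ω) i * τ ℓ (X ω) ∂P := by
  intro i
  have hshape : ∀ ℓ ω, w (X ω) * ((T ω - π) * f ℓ (X ω) i) * Y ω ℓ
      = (T ω - π) * (w (X ω) * f ℓ (X ω) i) * Y ω ℓ := fun _ _ => by ring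
  have hF : ∀ ℓ, StronglyMeasurable[MeasurableSpace.comap X ‹_›]
      fun ω => w (X ω) * f ℓ (X ω) i := fun ℓ =>
    ((hwm.mul ((measurable_pi_apply i).comp (hf ℓ))).comp (comap_measurable X)).stronglyMeasurable
  have hYint : ∀ ℓ, Integrable (fun ω => Y ω ℓ) Q := fun ℓ => (hY2 ℓ).integrable one_le_two
  have hNum : ∀ ℓ, Integrable (fun ω => (T ω - π) * (w (X ω) * f ℓ (X ω) i) * Y ω ℓ) Q :=
    fun ℓ => (hNumInt ℓ i).congr (.of_forall (hshape ℓ))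
  have hwfτ : ∀ ℓ, Integrable (fun ω => w (X ω) * f ℓ (X ω) i * τ ℓ (X ω)) Q := fun ℓ =>
    integrable_mul_treatment_contrast hT hX hindepQ hT01 hπ0 hπ1 hTπQ (hτ ℓ) (hF ℓ) (hYint ℓ)
      (hNum ℓ)
  have hB₀Q := ae_of_ae_map hX.aemeasurable hB₀
  have hB₀P := ae_of_ae_map hX.aemeasurable (habs.ae_le hB₀)
  calc ∑ ℓ, ∫ ω, w (X ω) * ((T ω - π) * f ℓ (X ω) i) * Y ω ℓ ∂Q
      = π * (1 - π) * ∑ ℓ, ∫ ω, w (X ω) * f ℓ (X ω) i * τ ℓ (X ω) ∂Q := by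
        simp_rw [hshape, Finset.mul_sum]
        exact Finset.sum_congr rfl fun ℓ _ => integral_treatment_mul_eq_mul_integral_contrast
          hT hX hindepQ hT01 hπ0 hπ1 hTπQ (hτ ℓ) (hF ℓ) (hYint ℓ) (hNum ℓ)
    _ = π * (1 - π) * ∫ ω, (B₀ *ᵥ (w (X ω) • φ (X ω))) i ∂Q := by
        rw [← integral_finsetSum _ fun ℓ _ => hwfτ ℓ]
        congr 1
        refine integral_congr_ae (hB₀Q.mono fun ω hω => ?_)
        simp only [mulVec_smul, Pi.smul_apply, smul_eq_mul, ← hω i, Finset.mul_sum, mul_assoc]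
    _ = π * (1 - π) * ∫ ω, (B₀ *ᵥ φ (X ω)) i ∂P := by
        rw [integral_mulVec_apply (v := fun ω => w (X ω) • φ (X ω)) B₀ hφIntQ,
          integral_mulVec_apply B₀ hφIntP]
        simp only [Pi.smul_apply, smul_eq_mul, hbal]
    _ = π * (1 - π) * ∑ ℓ, ∫ ω, f ℓ (X ω) i * τ ℓ (X ω) ∂P := by
        rw [← integral_finsetSum _ fun ℓ _ => hτInt ℓ i]
        congr 1
        exact integral_congr_ae (hB₀P.mono fun ω hω => (hω i).symm)

/-- numerator identity under a linear conditional average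
treatment effect. If `w` balances `φ` between `Q` and `P` and
`Σ_ℓ f_ℓ τ_ℓ = B₀ φ` holds `Q_X`-a.e., then
`Σ_ℓ E_Q[w(X)(T−π) f_ℓ(X) Y_ℓ] = π(1−π) Σ_ℓ E_P[f_ℓ(X) τ_ℓ(X)]`. -/
theorem statement9
    {Ω 𝒳 : Type*} [MeasurableSpace Ω] [MeasurableSpace 𝒳]
    {p a d : ℕ}
    (P Q : Measure Ω) [IsProbabilityMeasure P] [IsProbabilityMeasure Q]
    (X : Ω → 𝒳) (T : Ω → ℝ) (Y : Ω → Fin p → ℝ)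
    (f : Fin p → 𝒳 → Fin a → ℝ)
    (hX : Measurable X) (hT : Measurable T) (hY : Measurable Y)
    (hf : ∀ ℓ, Measurable (f ℓ))
    (π : ℝ) (hπ0 : 0 < π) (hπ1 : π < 1)
    (hT01 : ∀ ω, T ω = 0 ∨ T ω = 1)
    (hTπQ : Q {ω | T ω = 1} = ENNReal.ofReal π)
    (hindepQ : IndepFun T X Q)
    (hY2 : ∀ ℓ, MemLp (fun ω => Y ω ℓ) 2 Q)
    -- covariate overlap: P_X ≪ Q_X
    (habs : P.map X ≪ Q.map X)
    -- τ_ℓ(X) is a version of E_Q[Y_ℓ ∣ X, T=1] − E_Q[Y_ℓ ∣ X, T=0]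
    (τ : Fin p → 𝒳 → ℝ) (hτm : ∀ ℓ, Measurable (τ ℓ))
    (hτ : ∀ ℓ, (fun ω => τ ℓ (X ω)) =ᵐ[Q]
      fun ω => (MeasureTheory.condExp (MeasurableSpace.comap X ‹MeasurableSpace 𝒳›)
          (Q[|{ω' | T ω' = 1}]) (fun ω' => Y ω' ℓ)) ω
        - (MeasureTheory.condExp (MeasurableSpace.comap X ‹MeasurableSpace 𝒳›)
          (Q[|{ω' | T ω' = 0}]) (fun ω' => Y ω' ℓ)) ω)
    -- balancing features and weight
    (φ : 𝒳 → Fin d → ℝ) (hφ : Measurable φ)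
    (w : 𝒳 → ℝ) (hwm : Measurable w) (hw0 : ∀ x, 0 ≤ w x)
    (hbal : ∀ k, ∫ ω, w (X ω) * φ (X ω) k ∂Q = ∫ ω, φ (X ω) k ∂P)
    -- linear CATE: Σ_ℓ f_ℓ τ_ℓ = B₀ φ, Q_X-a.e.
    (B₀ : Matrix (Fin a) (Fin d) ℝ)
    (hB₀ : ∀ᵐ x ∂(Q.map X), ∀ i : Fin a, ∑ ℓ, f ℓ x i * τ ℓ x = (B₀ *ᵥ φ x) i)
    -- all displayed expectations are finite
    (hNumInt : ∀ ℓ, ∀ i : Fin a,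
      Integrable (fun ω => w (X ω) * ((T ω - π) * f ℓ (X ω) i) * Y ω ℓ) Q)
    (hτInt : ∀ ℓ, ∀ i : Fin a, Integrable (fun ω => f ℓ (X ω) i * τ ℓ (X ω)) P)
    (hφIntP : ∀ k, Integrable (fun ω => φ (X ω) k) P)
    (hφIntQ : ∀ k, Integrable (fun ω => w (X ω) * φ (X ω) k) Q) :
    ∀ i : Fin a,
      ∑ ℓ, ∫ ω, w (X ω) * ((T ω - π) * f ℓ (X ω) i) * Y ω ℓ ∂Q
        = π * (1 - π) * ∑ ℓ, ∫ ω, f ℓ (X ω) i * τ ℓ (X ω) ∂P :=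
  statement9_general P Q X T Y f hX hT hf π hπ0 hπ1 hT01 hTπQ hindepQ hY2 habs τ hτ φ w hwm hbal B₀
    hB₀ hNumInt hτInt hφIntP hφIntQ
end

section
/- (Weighting by the true covariate density ratio identifies the transported coefficient, stated via conditional distributions.) Let 𝒳 be a standard Borel space and let P and Q be joint distributions of (X,T,Y) on 𝒳 × {0,1} × ℝ^p such that under Q, T is Bernoulli(π), 0 < π < 1, independent of X and Y is square-integrable, and P_X ≪ Q_X with w := dP_X/dQ_X. Let κ be a regular conditional distribution (Markov kernel) of Y given (X,T) under Q, and let F* := (law of (X,T) under P replaced so that X ∼ P_X and T Bernoulli(π) independent of X) ⊗ κ be the transported distribution, i.e., (X,T) ∼ P_X × Bernoulli(π) composed with κ. Assume Σ_{ℓ=1}^p E_P[f_ℓ(X) f_ℓ(X)ᵀ] and Σ_{ℓ=1}^p E_P[g_ℓ(X) g_ℓ(X)ᵀ] are invertible and all displayed integrals are finite. Then the θ-component of the unique minimizer over (θ,β) of E_Q[w(X) · Σ_{ℓ=1}^p (Y_ℓ − θᵀ(T−π) f_ℓ(X) − βᵀ g_ℓ(X))²] equals the θ-component of the unique minimizer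 over (θ,β) of E_{F*}[Σ_{ℓ=1}^p (Y_ℓ − θᵀ(T−π) f_ℓ(X) − βᵀ g_ℓ(X))²]. -/
/-!
Both objectives are integrals against the same measure. Since `P_X = w · Q_X`, since `(X, T)` has
law `Q_X ⊗ Bernoulli(π)` under `Q` (independence), and since `κ` is the conditional law of `Y`,
the transported law `F* = (P_X ⊗ Bernoulli(π)) ⊗ κ` is the `Q`-law of `((X, T), Y)` reweighted by
`w(X)`. So the two objectives agree for every `(θ, β)`, and it suffices to show that the `F*`
objective has a unique minimizer. Stacking `v = (θ, β)`, it is the quadratic function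
`E‖Y − Z v‖²` of `v`, where row `ℓ` of the design `Z` is `((T − π) f_ℓ(X), g_ℓ(X))`; it has a unique
minimizer as soon as the Gram matrix `E[Zᵀ Z]` is positive definite. Under `F*`, `T` is independent
of `X` with `E[T − π] = 0` and `E[(T − π)²] = π(1 − π)`, so `E[Zᵀ Z] = diag(π(1 − π) M, G)` with
`M`, `G` the feature Gram matrices under `P`, which are positive semidefinite and invertible,
hence positive definite.
-/

open MeasureTheory ProbabilityTheory Matrix
open scoped ENNReal

/-- The weighted population least-squares objective
`E_F[W · Σ_ℓ (Y_ℓ − θᵀ(T−c) f_ℓ(X) − βᵀ g_ℓ(X))²]`. -/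
noncomputable def wlsObj {Ω 𝒳 : Type*} [MeasurableSpace Ω]
    {p a b : ℕ} (F : Measure Ω) (X : Ω → 𝒳) (T : Ω → ℝ) (Y : Ω → Fin p → ℝ)
    (f : Fin p → 𝒳 → Fin a → ℝ) (g : Fin p → 𝒳 → Fin b → ℝ)
    (W : Ω → ℝ) (c : ℝ) (θβ : (Fin a → ℝ) × (Fin b → ℝ)) : ℝ :=
  ∫ ω, W ω * ∑ ℓ, (Y ω ℓ - (∑ i, θβ.1 i * ((T ω - c) * f ℓ (X ω) i))
      - ∑ j, θβ.2 j * g ℓ (X ω) j) ^ 2 ∂F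

theorem Matrix.PosDef.existsUnique_forall_le {ι : Type*} [Fintype ι] [DecidableEq ι]
    {S : Matrix ι ι ℝ} (hS : S.PosDef) {m : ι → ℝ} {J : (ι → ℝ) → ℝ}
    (hJ : ∀ v, J v = J 0 - 2 * (v ⬝ᵥ m) + v ⬝ᵥ S *ᵥ v) :
    ∃! v, ∀ v', J v ≤ J v' := by
  set v₀ := S⁻¹ *ᵥ m
  have hv₀ : S *ᵥ v₀ = m := by
    rw [mulVec_mulVec, mul_nonsing_inv _ ((isUnit_iff_isUnit_det S).mp hS.isUnit), one_mulVec]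
  have hsymm : ∀ v, v₀ ⬝ᵥ S *ᵥ v = v ⬝ᵥ m := fun v => by
    rw [dotProduct_mulVec, ← mulVec_transpose, ← conjTranspose_eq_transpose_of_trivial,
      hS.isHermitian.eq, hv₀, dotProduct_comm]
  have hJ_eq : ∀ v, J v = J v₀ + (v - v₀) ⬝ᵥ S *ᵥ (v - v₀) := fun v => by
    rw [hJ v, hJ v₀, mulVec_sub, dotProduct_sub, sub_dotProduct, sub_dotProduct, hsymm v, hv₀]
    ring
  refine ⟨v₀, fun v => ?_, fun v hv => ?_⟩
  · simpa [hJ_eq v] using hS.posSemidef.dotProduct_mulVec_nonneg (v - v₀)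
  · by_contra hne
    have hpos := hS.dotProduct_mulVec_pos (sub_ne_zero.mpr hne)
    rw [star_trivial] at hpos
    linarith [hv v₀, hJ_eq v]

lemma Matrix.PosDef.fromBlocks_zero {m n : Type*} [Fintype m] [Fintype n]
    {A : Matrix m m ℝ} {D : Matrix n n ℝ} (hA : A.PosDef) (hD : D.PosDef) :
    (fromBlocks A 0 0 D).PosDef := by
  refine .of_dotProduct_mulVec_pos (hA.isHermitian.fromBlocks (by simp) hD.isHermitian)
    fun x hx => ?_
  obtain ⟨x₁, x₂, rfl⟩ : ∃ x₁ x₂, x = Sum.elim x₁ x₂ := ⟨_, _, (Sum.elim_comp_inl_inr x).symm⟩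
  have h₁ := hA.posSemidef.dotProduct_mulVec_nonneg x₁
  have h₂ := hD.posSemidef.dotProduct_mulVec_nonneg x₂
  simp only [fromBlocks_mulVec, Sum.elim_comp_inl, Sum.elim_comp_inr, zero_mulVec, add_zero,
    zero_add, star_trivial, sumElim_dotProduct_sumElim] at h₁ h₂ ⊢
  by_cases hx₁ : x₁ = 0
  · have hx₂ : x₂ ≠ 0 := by rintro rfl; exact hx (by rw [hx₁, Sum.elim_zero_zero])
    have hpos := hD.dotProduct_mulVec_pos hx₂
    rw [star_trivial] at hpos
    linarith
  · have hpos := hA.dotProduct_mulVec_pos hx₁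
    rw [star_trivial] at hpos
    linarith

section LeastSquares

variable {Ω ι L : Type*} [MeasurableSpace Ω] [Fintype ι] [Fintype L] {μ : Measure Ω}

lemma sub_mulVec_dotProduct_self (A : Matrix L ι ℝ) (c : L → ℝ) (v : ι → ℝ) :
    (c - A *ᵥ v) ⬝ᵥ (c - A *ᵥ v) = c ⬝ᵥ c - 2 * (v ⬝ᵥ Aᵀ *ᵥ c) + v ⬝ᵥ (Aᵀ * A) *ᵥ v := by
  rw [← mulVec_mulVec, mulVec_transpose, mulVec_transpose, dotProduct_comm v, dotProduct_comm v,
    ← dotProduct_mulVec, ← dotProduct_mulVec]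
  simp only [sub_dotProduct, dotProduct_sub, dotProduct_comm (A *ᵥ v) c]
  ring

lemma dotProduct_transpose_mul_self_mulVec (A : Matrix L ι ℝ) (v : ι → ℝ) :
    v ⬝ᵥ (Aᵀ * A) *ᵥ v = (A *ᵥ v) ⬝ᵥ (A *ᵥ v) := by
  rw [← mulVec_mulVec, mulVec_transpose, dotProduct_comm, ← dotProduct_mulVec]

lemma transpose_mul_self_apply [DecidableEq ι] (A : Matrix L ι ℝ) (k k' : ι) :
    (Aᵀ * A) k k' = (A *ᵥ Pi.single k 1) ⬝ᵥ (A *ᵥ Pi.single k' 1) := by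
  simp [mul_apply, dotProduct]

lemma transpose_mulVec_apply [DecidableEq ι] (A : Matrix L ι ℝ) (c : L → ℝ) (k : ι) :
    (Aᵀ *ᵥ c) k = c ⬝ᵥ A *ᵥ Pi.single k 1 := by
  rw [mulVec_single_one]
  simp [mulVec, dotProduct, mul_comm]

lemma integral_dotProduct {h : Ω → ι → ℝ} (hh : ∀ k, Integrable (fun ω => h ω k) μ)
    (v : ι → ℝ) : ∫ ω, v ⬝ᵥ h ω ∂μ = v ⬝ᵥ fun k => ∫ ω, h ω k ∂μ := by
  simp only [dotProduct]
  rw [integral_finsetSum _ fun k _ => (hh k).const_mul (v k)]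
  simp only [integral_const_mul]

lemma integral_dotProduct_mulVec {S : Ω → Matrix ι ι ℝ}
    (hS : ∀ k k', Integrable (fun ω => S ω k k') μ) (v : ι → ℝ) :
    ∫ ω, v ⬝ᵥ S ω *ᵥ v ∂μ = v ⬝ᵥ (of fun k k' => ∫ ω, S ω k k' ∂μ) *ᵥ v := by
  have hSv : ∀ k, Integrable (fun ω => (S ω *ᵥ v) k) μ := fun k =>
    integrable_finsetSum _ fun k' _ => (hS k k').mul_const (v k')
  rw [integral_dotProduct hSv]
  congr 1
  ext k
  simp only [mulVec, dotProduct, of_apply]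
  rw [integral_finsetSum _ fun k' _ => (hS k k').mul_const (v k')]
  simp only [integral_mul_const]

lemma posSemidef_integral_transpose_mul_self {A : Ω → Matrix L ι ℝ}
    (hA : ∀ k k', Integrable (fun ω => ((A ω)ᵀ * A ω) k k') μ) :
    (of fun k k' => ∫ ω, ((A ω)ᵀ * A ω) k k' ∂μ).PosSemidef := by
  refine .of_dotProduct_mulVec_nonneg ?_ fun v => ?_
  · ext k k'
    simp only [conjTranspose_apply, of_apply, star_trivial]
    refine integral_congr_ae (.of_forall fun ω => ?_)
    simp only [mul_apply, transpose_apply, mul_comm]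
  · rw [star_trivial, ← integral_dotProduct_mulVec hA]
    refine integral_nonneg fun ω => ?_
    rw [dotProduct_transpose_mul_self_mulVec]
    exact dotProduct_self_star_nonneg _

variable {A : Ω → Matrix L ι ℝ} {c : Ω → L → ℝ}

-- By polarization, integrability of the residual at every `v` gives integrability of its
-- quadratic and linear parts in `v`.

lemma integrable_mulVec_dotProduct_self
    (hint : ∀ v, Integrable (fun ω => (c ω - A ω *ᵥ v) ⬝ᵥ (c ω - A ω *ᵥ v)) μ) (v : ι → ℝ) :
    Integrable (fun ω => (A ω *ᵥ v) ⬝ᵥ (A ω *ᵥ v)) μ := by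
  refine ((((hint v).add (hint (-v))).div_const 2).sub (hint 0)).congr (.of_forall fun ω => ?_)
  simp only [Pi.add_apply, Pi.sub_apply, mulVec_neg, mulVec_zero, sub_neg_eq_add, sub_zero,
    sub_dotProduct, dotProduct_sub, add_dotProduct, dotProduct_add]
  rw [dotProduct_comm (A ω *ᵥ v) (c ω)]
  ring

lemma integrable_mulVec_dotProduct_mulVec
    (hint : ∀ v, Integrable (fun ω => (c ω - A ω *ᵥ v) ⬝ᵥ (c ω - A ω *ᵥ v)) μ) (u v : ι → ℝ) :
    Integrable (fun ω => (A ω *ᵥ u) ⬝ᵥ (A ω *ᵥ v)) μ := by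
  refine (((integrable_mulVec_dotProduct_self hint (u + v)).sub
    (integrable_mulVec_dotProduct_self hint (u - v))).div_const 4).congr (.of_forall fun ω => ?_)
  simp only [Pi.sub_apply, mulVec_add, mulVec_sub, sub_dotProduct, dotProduct_sub,
    add_dotProduct, dotProduct_add]
  rw [dotProduct_comm (A ω *ᵥ v) (A ω *ᵥ u)]
  ring

lemma integrable_dotProduct_mulVec
    (hint : ∀ v, Integrable (fun ω => (c ω - A ω *ᵥ v) ⬝ᵥ (c ω - A ω *ᵥ v)) μ) (v : ι → ℝ) :
    Integrable (fun ω => c ω ⬝ᵥ A ω *ᵥ v) μ := by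
  refine (((hint (-v)).sub (hint v)).div_const 4).congr (.of_forall fun ω => ?_)
  simp only [Pi.sub_apply, mulVec_neg, sub_neg_eq_add, sub_dotProduct, dotProduct_sub,
    add_dotProduct, dotProduct_add]
  rw [dotProduct_comm (A ω *ᵥ v) (c ω)]
  ring

theorem existsUnique_forall_integral_sub_mulVec_le
    (hint : ∀ v, Integrable (fun ω => (c ω - A ω *ᵥ v) ⬝ᵥ (c ω - A ω *ᵥ v)) μ)
    (hA : (of fun k k' => ∫ ω, ((A ω)ᵀ * A ω) k k' ∂μ).PosDef) :
    ∃! v, ∀ v', ∫ ω, (c ω - A ω *ᵥ v) ⬝ᵥ (c ω - A ω *ᵥ v) ∂μ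
      ≤ ∫ ω, (c ω - A ω *ᵥ v') ⬝ᵥ (c ω - A ω *ᵥ v') ∂μ := by
  classical
  have hgram : ∀ k k', Integrable (fun ω => ((A ω)ᵀ * A ω) k k') μ := fun k k' => by
    simpa only [transpose_mul_self_apply] using integrable_mulVec_dotProduct_mulVec hint _ _
  have hcross : ∀ k, Integrable (fun ω => ((A ω)ᵀ *ᵥ c ω) k) μ := fun k => by
    simpa only [transpose_mulVec_apply] using integrable_dotProduct_mulVec hint _
  refine hA.existsUnique_forall_le (m := fun k => ∫ ω, ((A ω)ᵀ *ᵥ c ω) k ∂μ) fun v => ?_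
  have hlin : Integrable (fun ω => 2 * (v ⬝ᵥ (A ω)ᵀ *ᵥ c ω)) μ := by
    refine (integrable_dotProduct_mulVec hint v).const_mul 2 |>.congr (.of_forall fun ω => ?_)
    simp only [mulVec_transpose, dotProduct_comm v, ← dotProduct_mulVec]
  have hquad : Integrable (fun ω => v ⬝ᵥ ((A ω)ᵀ * A ω) *ᵥ v) μ := by
    simpa only [dotProduct_transpose_mul_self_mulVec] using
      integrable_mulVec_dotProduct_self hint v
  have hconst : Integrable (fun ω => c ω ⬝ᵥ c ω) μ := by simpa using hint 0
  simp only [sub_mulVec_dotProduct_self, mulVec_zero, sub_zero]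
  have hconst_sub : Integrable (fun ω => c ω ⬝ᵥ c ω - 2 * (v ⬝ᵥ (A ω)ᵀ *ᵥ c ω)) μ :=
    hconst.sub hlin
  rw [integral_add hconst_sub hquad, integral_sub hconst hlin, integral_const_mul,
    integral_dotProduct hcross, integral_dotProduct_mulVec hgram]

end LeastSquares

lemma posDef_sum_integral_mul_of_isUnit {Ω L n : Type*} [MeasurableSpace Ω] [Fintype L]
    [Fintype n] [DecidableEq n] {μ : Measure Ω} {φ : L → Ω → n → ℝ}
    (hint : ∀ ℓ i j, Integrable (fun ω => φ ℓ ω i * φ ℓ ω j) μ)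
    (hunit : IsUnit (of fun i j => ∑ ℓ, ∫ ω, φ ℓ ω i * φ ℓ ω j ∂μ)) :
    (of fun i j => ∑ ℓ, ∫ ω, φ ℓ ω i * φ ℓ ω j ∂μ).PosDef := by
  have hgram : (of fun i j => ∑ ℓ, ∫ ω, φ ℓ ω i * φ ℓ ω j ∂μ)
      = of fun i j => ∫ ω, ((of fun ℓ i => φ ℓ ω i)ᵀ * of fun ℓ i => φ ℓ ω i) i j ∂μ := by
    ext i j
    simp only [of_apply, mul_apply, transpose_apply]
    rw [integral_finsetSum _ fun ℓ _ => hint ℓ i j]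
  rw [hgram] at hunit ⊢
  refine (posSemidef_integral_transpose_mul_self fun i j => ?_).posDef_iff_isUnit.mpr hunit
  simpa only [mul_apply, transpose_apply, of_apply] using
    integrable_finsetSum _ fun ℓ _ => hint ℓ i j

lemma MeasureTheory.Measure.withDensity_compProd_left {α β : Type*} [MeasurableSpace α]
    [MeasurableSpace β] {μ : Measure α} [SFinite μ] {κ : Kernel α β} [IsSFiniteKernel κ]
    {f : α → ℝ≥0∞} (hf : Measurable f) :
    μ.withDensity f ⊗ₘ κ = (μ ⊗ₘ κ).withDensity (fun p => f p.1) := by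
  refine ext_of_lintegral _ fun φ hφ => ?_
  rw [Measure.lintegral_compProd hφ, lintegral_withDensity_eq_lintegral_mul _ hf (by fun_prop),
    lintegral_withDensity_eq_lintegral_mul _ (by fun_prop) hφ,
    Measure.lintegral_compProd (by fun_prop)]
  refine lintegral_congr fun x => ?_
  rw [Pi.mul_apply, ← lintegral_const_mul _ (by fun_prop)]
  rfl

lemma MeasureTheory.Measure.integral_compProd_fst {α β E : Type*} [MeasurableSpace α]
    [MeasurableSpace β] [NormedAddCommGroup E] [NormedSpace ℝ E] {μ : Measure α} [SFinite μ]
    {κ : Kernel α β} [IsMarkovKernel κ] {h : α → E} (hh : AEStronglyMeasurable h μ) :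
    ∫ p, h p.1 ∂(μ ⊗ₘ κ) = ∫ x, h x ∂μ := by
  conv_rhs => rw [← Measure.fst_compProd μ κ]
  rw [Measure.fst, integral_map measurable_fst.aemeasurable (by rwa [← Measure.fst, fst_compProd])]

lemma MeasureTheory.integral_withDensity_ofReal {α : Type*} [MeasurableSpace α] {μ : Measure α}
    {w : α → ℝ} (hw : Measurable w) (hw0 : ∀ x, 0 ≤ w x) (g : α → ℝ) :
    ∫ x, g x ∂μ.withDensity (fun x => ENNReal.ofReal (w x)) = ∫ x, w x * g x ∂μ := by
  rw [integral_withDensity_eq_integral_toReal_smul hw.ennreal_ofReal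
    (.of_forall fun _ => ENNReal.ofReal_lt_top)]
  simp only [ENNReal.toReal_ofReal (hw0 _), smul_eq_mul]

lemma integral_map_sum_mul {Ω 𝒳 : Type*} [MeasurableSpace Ω] [MeasurableSpace 𝒳] {p n : ℕ}
    {P : Measure Ω} {X : Ω → 𝒳} (hX : Measurable X) {h : Fin p → 𝒳 → Fin n → ℝ}
    (hh : ∀ ℓ, Measurable (h ℓ))
    (hint : ∀ ℓ i j, Integrable (fun ω => h ℓ (X ω) i * h ℓ (X ω) j) P) (i j : Fin n) :
    ∫ x, ∑ ℓ, h ℓ x i * h ℓ x j ∂P.map X = ∑ ℓ, ∫ ω, h ℓ (X ω) i * h ℓ (X ω) j ∂P := by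
  rw [integral_map hX.aemeasurable (by fun_prop), integral_finsetSum _ fun ℓ _ => hint ℓ i j]

/-- `Bernoulli(π)` on `ℝ`; since `ENNReal.ofReal` truncates at `0`, it is a probability measure
only for `0 ≤ π ≤ 1`. -/
noncomputable def bernoulliReal (π : ℝ) : Measure ℝ :=
  ENNReal.ofReal π • Measure.dirac 1 + ENNReal.ofReal (1 - π) • Measure.dirac 0

instance (π : ℝ) : SFinite (bernoulliReal π) := by
  unfold bernoulliReal
  infer_instance

lemma integral_bernoulliReal {π : ℝ} (hπ0 : 0 ≤ π) (hπ1 : π ≤ 1) (ψ : ℝ → ℝ) :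
    ∫ t, ψ t ∂bernoulliReal π = π * ψ 1 + (1 - π) * ψ 0 := by
  have hdirac : ∀ (r : ℝ) (s : ℝ≥0∞), s ≠ ∞ → Integrable ψ (s • Measure.dirac r) := fun r s hs =>
    (integrable_dirac enorm_lt_top).smul_measure hs
  rw [bernoulliReal,
    integral_add_measure (hdirac _ _ ENNReal.ofReal_ne_top) (hdirac _ _ ENNReal.ofReal_ne_top),
    integral_smul_measure, integral_smul_measure, integral_dirac, integral_dirac,
    ENNReal.toReal_ofReal hπ0, ENNReal.toReal_ofReal (sub_nonneg.mpr hπ1), smul_eq_mul,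
    smul_eq_mul]

lemma MeasureTheory.Measure.map_eq_bernoulliReal {Ω : Type*} [MeasurableSpace Ω]
    {μ : Measure Ω} [IsProbabilityMeasure μ] {T : Ω → ℝ} (hT : Measurable T)
    (hT01 : ∀ ω, T ω = 0 ∨ T ω = 1) {π : ℝ} (hπ : 0 ≤ π)
    (hT1 : μ {ω | T ω = 1} = ENNReal.ofReal π) :
    μ.map T = bernoulliReal π := by
  have hs : MeasurableSet {ω | T ω = 1} := hT (measurableSet_singleton 1)
  have hT0 : ∀ ω ∈ {ω | T ω = 1}ᶜ, T ω = 0 := fun ω hω => (hT01 ω).resolve_right hω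
  have hcompl : μ {ω | T ω = 1}ᶜ = ENNReal.ofReal (1 - π) := by
    rw [prob_compl_eq_one_sub hs, hT1, ENNReal.ofReal_sub 1 hπ, ENNReal.ofReal_one]
  rw [← restrict_add_restrict_compl (μ := μ) hs, Measure.map_add _ _ hT,
    map_congr (g := fun _ => 1) ((ae_restrict_mem hs).mono fun ω hω => hω),
    map_congr (g := fun _ => 0) ((ae_restrict_mem hs.compl).mono hT0),
    map_const, map_const, restrict_apply_univ, restrict_apply_univ, hT1, hcompl, bernoulliReal]

section Model

variable {𝒳 : Type*} {p a b : ℕ}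

/-- The design matrix at `(x, t)`: row `ℓ` holds the regressors of the `ℓ`-th equation, with `θ`
and `β` stacked into a single coefficient vector indexed by `Fin a ⊕ Fin b`. -/
def designMatrix (f : Fin p → 𝒳 → Fin a → ℝ) (g : Fin p → 𝒳 → Fin b → ℝ) (c : ℝ)
    (xt : 𝒳 × ℝ) : Matrix (Fin p) (Fin a ⊕ Fin b) ℝ :=
  of fun ℓ => Sum.elim (fun i => (xt.2 - c) * f ℓ xt.1 i) (g ℓ xt.1)

lemma sum_sq_residual_eq (f : Fin p → 𝒳 → Fin a → ℝ) (g : Fin p → 𝒳 → Fin b → ℝ) (c : ℝ)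
    (x : 𝒳) (t : ℝ) (y : Fin p → ℝ) (θ : Fin a → ℝ) (β : Fin b → ℝ) :
    ∑ ℓ, (y ℓ - ∑ i, θ i * ((t - c) * f ℓ x i) - ∑ j, β j * g ℓ x j) ^ 2
      = (y - designMatrix f g c (x, t) *ᵥ Sum.elim θ β)
          ⬝ᵥ (y - designMatrix f g c (x, t) *ᵥ Sum.elim θ β) := by
  have hrow : ∀ ℓ, (designMatrix f g c (x, t) *ᵥ Sum.elim θ β) ℓ
      = ∑ i, θ i * ((t - c) * f ℓ x i) + ∑ j, β j * g ℓ x j := fun ℓ => by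
    change Sum.elim _ _ ⬝ᵥ Sum.elim θ β = _
    rw [sumElim_dotProduct_sumElim, dotProduct_comm, dotProduct_comm (g ℓ x)]
    rfl
  simp only [dotProduct, Pi.sub_apply, hrow, sq, sub_sub]

lemma existsUnique_wlsObj_le [MeasurableSpace 𝒳]
    {ν : Measure ((𝒳 × ℝ) × (Fin p → ℝ))}
    {f : Fin p → 𝒳 → Fin a → ℝ} {g : Fin p → 𝒳 → Fin b → ℝ} {c : ℝ}
    (hint : ∀ θβ : (Fin a → ℝ) × (Fin b → ℝ), Integrable (fun z : (𝒳 × ℝ) × (Fin p → ℝ) =>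
      ∑ ℓ, (z.2 ℓ - (∑ i, θβ.1 i * ((z.1.2 - c) * f ℓ z.1.1 i))
        - ∑ j, θβ.2 j * g ℓ z.1.1 j) ^ 2) ν)
    (hgram : (of fun k k' =>
      ∫ z, ((designMatrix f g c z.1)ᵀ * designMatrix f g c z.1) k k' ∂ν).PosDef) :
    ∃! θβ, ∀ θβ', wlsObj ν (fun z => z.1.1) (fun z => z.1.2) (fun z => z.2) f g (fun _ => 1) c θβ
      ≤ wlsObj ν (fun z => z.1.1) (fun z => z.1.2) (fun z => z.2) f g (fun _ => 1) c θβ' := by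
  let e := Equiv.sumArrowEquivProdArrow (Fin a) (Fin b) ℝ
  have hres : ∀ (v : Fin a ⊕ Fin b → ℝ) (z : (𝒳 × ℝ) × (Fin p → ℝ)),
      (z.2 - designMatrix f g c z.1 *ᵥ v) ⬝ᵥ (z.2 - designMatrix f g c z.1 *ᵥ v)
        = ∑ ℓ, (z.2 ℓ - (∑ i, (e v).1 i * ((z.1.2 - c) * f ℓ z.1.1 i))
            - ∑ j, (e v).2 j * g ℓ z.1.1 j) ^ 2 := fun v z => by
    have he : Sum.elim (e v).1 (e v).2 = v := Sum.elim_comp_inl_inr v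
    rw [sum_sq_residual_eq, he]
  have hv := existsUnique_forall_integral_sub_mulVec_le (μ := ν)
    (fun v => (hint (e v)).congr (.of_forall fun z => (hres v z).symm)) hgram
  set J := wlsObj ν (fun z => z.1.1) (fun z => z.1.2) (fun z => z.2) f g (fun _ => 1) c
  have hJ : ∀ v : Fin a ⊕ Fin b → ℝ, ∫ z, (z.2 - designMatrix f g c z.1 *ᵥ v)
      ⬝ᵥ (z.2 - designMatrix f g c z.1 *ᵥ v) ∂ν = J (e v) := fun v => by
    simp only [J, wlsObj, one_mul, hres]
  simp only [hJ] at hv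
  exact (e.existsUnique_congr fun v =>
    e.forall_congr_right (q := fun θβ => J (e v) ≤ J θβ)).mp hv

lemma wlsObj_withDensity_map_eq {Ω : Type*} [MeasurableSpace Ω] [MeasurableSpace 𝒳]
    {Q : Measure Ω} {X : Ω → 𝒳} {T : Ω → ℝ} {Y : Ω → Fin p → ℝ}
    (hX : Measurable X) (hT : Measurable T) (hY : Measurable Y)
    {f : Fin p → 𝒳 → Fin a → ℝ} {g : Fin p → 𝒳 → Fin b → ℝ}
    (hf : ∀ ℓ, Measurable (f ℓ)) (hg : ∀ ℓ, Measurable (g ℓ))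
    {w : 𝒳 → ℝ} (hw : Measurable w) (hw0 : ∀ x, 0 ≤ w x) (c : ℝ)
    (θβ : (Fin a → ℝ) × (Fin b → ℝ)) :
    wlsObj ((Q.map fun ω => ((X ω, T ω), Y ω)).withDensity fun z => ENNReal.ofReal (w z.1.1))
        (fun z => z.1.1) (fun z => z.1.2) (fun z => z.2) f g (fun _ => 1) c θβ
      = wlsObj Q X T Y f g (fun ω => w (X ω)) c θβ := by
  rw [wlsObj, integral_withDensity_ofReal (by fun_prop) (fun _ => hw0 _),
    integral_map (by fun_prop) (by fun_prop)]
  simp only [one_mul]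
  rfl

lemma integral_mul_compProd_prod_bernoulliReal [MeasurableSpace 𝒳] {β : Type*}
    [MeasurableSpace β] {μ : Measure 𝒳} [SFinite μ] {κ : Kernel (𝒳 × ℝ) β} [IsMarkovKernel κ]
    {π : ℝ} (hπ0 : 0 ≤ π) (hπ1 : π ≤ 1)
    {φ : 𝒳 → ℝ} {ψ : ℝ → ℝ} (hφ : Measurable φ) (hψ : Measurable ψ) :
    ∫ z, φ z.1.1 * ψ z.1.2 ∂(μ.prod (bernoulliReal π) ⊗ₘ κ)
      = (∫ x, φ x ∂μ) * (π * ψ 1 + (1 - π) * ψ 0) := by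
  refine (Measure.integral_compProd_fst (h := fun xt : 𝒳 × ℝ => φ xt.1 * ψ xt.2)
    (by fun_prop)).trans ?_
  rw [integral_prod_mul, integral_bernoulliReal hπ0 hπ1]

lemma gram_designMatrix_compProd_prod_bernoulliReal [MeasurableSpace 𝒳] {β : Type*}
    [MeasurableSpace β] {μ : Measure 𝒳} [SFinite μ] {κ : Kernel (𝒳 × ℝ) β} [IsMarkovKernel κ]
    {π : ℝ} (hπ0 : 0 ≤ π) (hπ1 : π ≤ 1)
    {f : Fin p → 𝒳 → Fin a → ℝ} {g : Fin p → 𝒳 → Fin b → ℝ}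
    (hf : ∀ ℓ, Measurable (f ℓ)) (hg : ∀ ℓ, Measurable (g ℓ)) :
    (of fun k k' => ∫ z, ((designMatrix f g π z.1)ᵀ * designMatrix f g π z.1) k k'
        ∂(μ.prod (bernoulliReal π) ⊗ₘ κ))
      = fromBlocks ((π * (1 - π)) • of fun i i' => ∫ x, ∑ ℓ, f ℓ x i * f ℓ x i' ∂μ) 0 0
          (of fun j j' => ∫ x, ∑ ℓ, g ℓ x j * g ℓ x j' ∂μ) := by
  have hfactor : ∀ k k' (φ : 𝒳 → ℝ) (ψ : ℝ → ℝ), Measurable φ → Measurable ψ →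
      (∀ x t, ((designMatrix f g π (x, t))ᵀ * designMatrix f g π (x, t)) k k' = φ x * ψ t) →
      ∫ z, ((designMatrix f g π z.1)ᵀ * designMatrix f g π z.1) k k'
          ∂(μ.prod (bernoulliReal π) ⊗ₘ κ) = (∫ x, φ x ∂μ) * (π * ψ 1 + (1 - π) * ψ 0) := fun k k' φ ψ hφ hψ h => by
    simp only [h]
    exact integral_mul_compProd_prod_bernoulliReal hπ0 hπ1 hφ hψ
  ext (i | j) (i' | j')
  · rw [of_apply, fromBlocks_apply₁₁, Matrix.smul_apply, of_apply, smul_eq_mul,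
      hfactor _ _ (fun x => ∑ ℓ, f ℓ x i * f ℓ x i') (fun t => (t - π) ^ 2) (by fun_prop)
        (by fun_prop) fun x t => ?_]
    · ring
    · simp only [mul_apply, transpose_apply, designMatrix, of_apply, Sum.elim_inl, Finset.sum_mul]
      exact Finset.sum_congr rfl fun _ _ => by ring
  · rw [of_apply, fromBlocks_apply₁₂, Matrix.zero_apply,
      hfactor _ _ (fun x => ∑ ℓ, f ℓ x i * g ℓ x j') (fun t => t - π) (by fun_prop)
        (by fun_prop) fun x t => ?_]
    · ring
    · simp only [mul_apply, transpose_apply, designMatrix, of_apply, Sum.elim_inl, Sum.elim_inr,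
        Finset.sum_mul]
      exact Finset.sum_congr rfl fun _ _ => by ring
  · rw [of_apply, fromBlocks_apply₂₁, Matrix.zero_apply,
      hfactor _ _ (fun x => ∑ ℓ, g ℓ x j * f ℓ x i') (fun t => t - π) (by fun_prop)
        (by fun_prop) fun x t => ?_]
    · ring
    · simp only [mul_apply, transpose_apply, designMatrix, of_apply, Sum.elim_inl, Sum.elim_inr,
        Finset.sum_mul]
      exact Finset.sum_congr rfl fun _ _ => by ring
  · rw [of_apply, fromBlocks_apply₂₂, of_apply,
      hfactor _ _ (fun x => ∑ ℓ, g ℓ x j * g ℓ x j') (fun _ => 1) (by fun_prop)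
        (by fun_prop) fun x t => ?_]
    · ring
    · simp only [mul_apply, transpose_apply, designMatrix, of_apply, Sum.elim_inr, mul_one]

end Model

theorem statement12_general
    {Ω 𝒳 : Type*} [MeasurableSpace Ω] [MeasurableSpace 𝒳]
    {p a b : ℕ}
    (P Q : Measure Ω) [IsProbabilityMeasure P] [IsProbabilityMeasure Q]
    (X : Ω → 𝒳) (T : Ω → ℝ) (Y : Ω → Fin p → ℝ)
    (f : Fin p → 𝒳 → Fin a → ℝ) (g : Fin p → 𝒳 → Fin b → ℝ)
    (hX : Measurable X) (hT : Measurable T) (hY : Measurable Y)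
    (hf : ∀ ℓ, Measurable (f ℓ)) (hg : ∀ ℓ, Measurable (g ℓ))
    (π : ℝ) (hπ0 : 0 < π) (hπ1 : π < 1)
    (hT01 : ∀ ω, T ω = 0 ∨ T ω = 1)
    (hTπQ : Q {ω | T ω = 1} = ENNReal.ofReal π)
    (hindepQ : IndepFun T X Q)
    -- w is a version of the density ratio dP_X/dQ_X
    (w : 𝒳 → ℝ) (hwm : Measurable w) (hw0 : ∀ x, 0 ≤ w x)
    (hdens : P.map X = (Q.map X).withDensity (fun x => ENNReal.ofReal (w x)))
    -- κ is a regular conditional distribution of Y given (X,T) under Q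
    (κ : ProbabilityTheory.Kernel (𝒳 × ℝ) (Fin p → ℝ)) [IsMarkovKernel κ]
    (hκ : Q.map (fun ω => ((X ω, T ω), Y ω))
      = (Q.map (fun ω => (X ω, T ω))) ⊗ₘ κ)
    -- invertibility of the Gram matrices under P
    (hMinv : IsUnit (Matrix.of fun i j : Fin a =>
      ∑ ℓ, ∫ ω, f ℓ (X ω) i * f ℓ (X ω) j ∂P))
    (hGinv : IsUnit (Matrix.of fun i j : Fin b =>
      ∑ ℓ, ∫ ω, g ℓ (X ω) i * g ℓ (X ω) j ∂P))
    -- all displayed integrals are finite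
    (hobjIntF : ∀ θβ : (Fin a → ℝ) × (Fin b → ℝ),
      Integrable (fun z : (𝒳 × ℝ) × (Fin p → ℝ) => ∑ ℓ, (z.2 ℓ
        - (∑ i, θβ.1 i * ((z.1.2 - π) * f ℓ z.1.1 i))
        - ∑ j, θβ.2 j * g ℓ z.1.1 j) ^ 2)
        (((P.map X).prod
          ((ENNReal.ofReal π) • Measure.dirac (1 : ℝ)
            + (ENNReal.ofReal (1 - π)) • Measure.dirac (0 : ℝ))) ⊗ₘ κ))
    (hMIntP : ∀ ℓ, ∀ i j : Fin a, Integrable (fun ω => f ℓ (X ω) i * f ℓ (X ω) j) P)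
    (hGIntP : ∀ ℓ, ∀ i j : Fin b, Integrable (fun ω => g ℓ (X ω) i * g ℓ (X ω) j) P) :
    (∃! θβ : (Fin a → ℝ) × (Fin b → ℝ),
      ∀ θβ', wlsObj Q X T Y f g (fun ω => w (X ω)) π θβ
        ≤ wlsObj Q X T Y f g (fun ω => w (X ω)) π θβ') ∧
    (∃! θβ : (Fin a → ℝ) × (Fin b → ℝ),
      ∀ θβ', wlsObj
          ((((P.map X).prod
            ((ENNReal.ofReal π) • Measure.dirac (1 : ℝ)
              + (ENNReal.ofReal (1 - π)) • Measure.dirac (0 : ℝ))) ⊗ₘ κ))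
          (fun z => z.1.1) (fun z => z.1.2) (fun z => z.2) f g (fun _ => 1) π θβ
        ≤ wlsObj
          ((((P.map X).prod
            ((ENNReal.ofReal π) • Measure.dirac (1 : ℝ)
              + (ENNReal.ofReal (1 - π)) • Measure.dirac (0 : ℝ))) ⊗ₘ κ))
          (fun z => z.1.1) (fun z => z.1.2) (fun z => z.2) f g (fun _ => 1) π θβ') ∧
    (∀ θβ θβ' : (Fin a → ℝ) × (Fin b → ℝ),
      (∀ q, wlsObj Q X T Y f g (fun ω => w (X ω)) π θβ
        ≤ wlsObj Q X T Y f g (fun ω => w (X ω)) π q) →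
      (∀ q, wlsObj
          ((((P.map X).prod
            ((ENNReal.ofReal π) • Measure.dirac (1 : ℝ)
              + (ENNReal.ofReal (1 - π)) • Measure.dirac (0 : ℝ))) ⊗ₘ κ))
          (fun z => z.1.1) (fun z => z.1.2) (fun z => z.2) f g (fun _ => 1) π θβ'
        ≤ wlsObj
          ((((P.map X).prod
            ((ENNReal.ofReal π) • Measure.dirac (1 : ℝ)
              + (ENNReal.ofReal (1 - π)) • Measure.dirac (0 : ℝ))) ⊗ₘ κ))
          (fun z => z.1.1) (fun z => z.1.2) (fun z => z.2) f g (fun _ => 1) π q) →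
      θβ.1 = θβ'.1) := by
  rw [show ENNReal.ofReal π • Measure.dirac (1 : ℝ) + ENNReal.ofReal (1 - π) • Measure.dirac 0
    = bernoulliReal π from rfl] at hobjIntF ⊢
  have hQXT : Q.map (fun ω => (X ω, T ω)) = (Q.map X).prod (bernoulliReal π) := by
    rw [(indepFun_iff_map_prod_eq_prod_map_map hX.aemeasurable hT.aemeasurable).mp hindepQ.symm,
      Measure.map_eq_bernoulliReal hT hT01 hπ0.le hTπQ]
  have hFstar : (P.map X).prod (bernoulliReal π) ⊗ₘ κ
      = (Q.map fun ω => ((X ω, T ω), Y ω)).withDensity fun z => ENNReal.ofReal (w z.1.1) := by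
    rw [hdens, prod_withDensity_left hwm.ennreal_ofReal,
      Measure.withDensity_compProd_left (by fun_prop), ← hQXT, ← hκ]
  have hgram : (of fun k k' => ∫ z, ((designMatrix f g π z.1)ᵀ * designMatrix f g π z.1) k k'
      ∂((P.map X).prod (bernoulliReal π) ⊗ₘ κ)).PosDef := by
    rw [gram_designMatrix_compProd_prod_bernoulliReal hπ0.le hπ1.le hf hg]
    simp only [integral_map_sum_mul hX hf hMIntP, integral_map_sum_mul hX hg hGIntP]
    exact ((posDef_sum_integral_mul_of_isUnit hMIntP hMinv).smul
      (mul_pos hπ0 (sub_pos.mpr hπ1))).fromBlocks_zero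
      (posDef_sum_integral_mul_of_isUnit hGIntP hGinv)
  have hmin := existsUnique_wlsObj_le hobjIntF hgram
  simp only [hFstar, wlsObj_withDensity_map_eq hX hT hY hf hg hwm hw0] at hmin ⊢
  exact ⟨hmin, hmin, fun θβ θβ' h h' => congrArg Prod.fst (hmin.unique h h')⟩

/-- weighting by the true covariate density ratio identifies the
transported coefficient.  With `κ` a regular conditional distribution of `Y`
given `(X,T)` under `Q`, and `F* = (P_X × Bernoulli(π)) ⊗ₘ κ` the transported
distribution, the θ-component of the unique minimizer of the `w`-weighted
least-squares objective under `Q` equals the θ-component of the unique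
minimizer of the unweighted objective under `F*`. -/
theorem statement12
    {Ω 𝒳 : Type*} [MeasurableSpace Ω] [MeasurableSpace 𝒳] [StandardBorelSpace 𝒳]
    {p a b : ℕ}
    (P Q : Measure Ω) [IsProbabilityMeasure P] [IsProbabilityMeasure Q]
    (X : Ω → 𝒳) (T : Ω → ℝ) (Y : Ω → Fin p → ℝ)
    (f : Fin p → 𝒳 → Fin a → ℝ) (g : Fin p → 𝒳 → Fin b → ℝ)
    (hX : Measurable X) (hT : Measurable T) (hY : Measurable Y)
    (hf : ∀ ℓ, Measurable (f ℓ)) (hg : ∀ ℓ, Measurable (g ℓ))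
    (π : ℝ) (hπ0 : 0 < π) (hπ1 : π < 1)
    (hT01 : ∀ ω, T ω = 0 ∨ T ω = 1)
    (hTπQ : Q {ω | T ω = 1} = ENNReal.ofReal π)
    (hindepQ : IndepFun T X Q)
    (hY2 : ∀ ℓ, MemLp (fun ω => Y ω ℓ) 2 Q)
    -- w is a version of the density ratio dP_X/dQ_X
    (w : 𝒳 → ℝ) (hwm : Measurable w) (hw0 : ∀ x, 0 ≤ w x)
    (habs : P.map X ≪ Q.map X)
    (hdens : P.map X = (Q.map X).withDensity (fun x => ENNReal.ofReal (w x)))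
    -- κ is a regular conditional distribution of Y given (X,T) under Q
    (κ : ProbabilityTheory.Kernel (𝒳 × ℝ) (Fin p → ℝ)) [IsMarkovKernel κ]
    (hκ : Q.map (fun ω => ((X ω, T ω), Y ω))
      = (Q.map (fun ω => (X ω, T ω))) ⊗ₘ κ)
    -- invertibility of the Gram matrices under P
    (hMinv : IsUnit (Matrix.of fun i j : Fin a =>
      ∑ ℓ, ∫ ω, f ℓ (X ω) i * f ℓ (X ω) j ∂P))
    (hGinv : IsUnit (Matrix.of fun i j : Fin b =>
      ∑ ℓ, ∫ ω, g ℓ (X ω) i * g ℓ (X ω) j ∂P))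
    -- all displayed integrals are finite
    (hobjIntQ : ∀ θβ : (Fin a → ℝ) × (Fin b → ℝ),
      Integrable (fun ω => w (X ω) * ∑ ℓ, (Y ω ℓ
        - (∑ i, θβ.1 i * ((T ω - π) * f ℓ (X ω) i))
        - ∑ j, θβ.2 j * g ℓ (X ω) j) ^ 2) Q)
    (hobjIntF : ∀ θβ : (Fin a → ℝ) × (Fin b → ℝ),
      Integrable (fun z : (𝒳 × ℝ) × (Fin p → ℝ) => ∑ ℓ, (z.2 ℓ
        - (∑ i, θβ.1 i * ((z.1.2 - π) * f ℓ z.1.1 i))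
        - ∑ j, θβ.2 j * g ℓ z.1.1 j) ^ 2)
        (((P.map X).prod
          ((ENNReal.ofReal π) • Measure.dirac (1 : ℝ)
            + (ENNReal.ofReal (1 - π)) • Measure.dirac (0 : ℝ))) ⊗ₘ κ))
    (hMIntP : ∀ ℓ, ∀ i j : Fin a, Integrable (fun ω => f ℓ (X ω) i * f ℓ (X ω) j) P)
    (hGIntP : ∀ ℓ, ∀ i j : Fin b, Integrable (fun ω => g ℓ (X ω) i * g ℓ (X ω) j) P) :
    (∃! θβ : (Fin a → ℝ) × (Fin b → ℝ),
      ∀ θβ', wlsObj Q X T Y f g (fun ω => w (X ω)) π θβ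
        ≤ wlsObj Q X T Y f g (fun ω => w (X ω)) π θβ') ∧
    (∃! θβ : (Fin a → ℝ) × (Fin b → ℝ),
      ∀ θβ', wlsObj
          ((((P.map X).prod
            ((ENNReal.ofReal π) • Measure.dirac (1 : ℝ)
              + (ENNReal.ofReal (1 - π)) • Measure.dirac (0 : ℝ))) ⊗ₘ κ))
          (fun z => z.1.1) (fun z => z.1.2) (fun z => z.2) f g (fun _ => 1) π θβ
        ≤ wlsObj
          ((((P.map X).prod
            ((ENNReal.ofReal π) • Measure.dirac (1 : ℝ)
              + (ENNReal.ofReal (1 - π)) • Measure.dirac (0 : ℝ))) ⊗ₘ κ))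
          (fun z => z.1.1) (fun z => z.1.2) (fun z => z.2) f g (fun _ => 1) π θβ') ∧
    (∀ θβ θβ' : (Fin a → ℝ) × (Fin b → ℝ),
      (∀ q, wlsObj Q X T Y f g (fun ω => w (X ω)) π θβ
        ≤ wlsObj Q X T Y f g (fun ω => w (X ω)) π q) →
      (∀ q, wlsObj
          ((((P.map X).prod
            ((ENNReal.ofReal π) • Measure.dirac (1 : ℝ)
              + (ENNReal.ofReal (1 - π)) • Measure.dirac (0 : ℝ))) ⊗ₘ κ))
          (fun z => z.1.1) (fun z => z.1.2) (fun z => z.2) f g (fun _ => 1) π θβ'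
        ≤ wlsObj
          ((((P.map X).prod
            ((ENNReal.ofReal π) • Measure.dirac (1 : ℝ)
              + (ENNReal.ofReal (1 - π)) • Measure.dirac (0 : ℝ))) ⊗ₘ κ))
          (fun z => z.1.1) (fun z => z.1.2) (fun z => z.2) f g (fun _ => 1) π q) →
      θβ.1 = θβ'.1) :=
  statement12_general P Q X T Y f g hX hT hY hf hg π hπ0 hπ1 hT01 hTπQ hindepQ w hwm hw0 hdens κ hκ
    hMinv hGinv hobjIntF hMIntP hGIntP
end
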